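/- arXiv:2105.12012 — 9 statements merged into one kernel-verified Lean document; each statement's English description precedes it below -/
import Mathlib

section
/- Let d divide q+1 with gcd(d, (q+1)/d) = 1, let ω be a primitive d-th root of unity in F_{q^2}, and let g: μ_{q+1} → μ_{q+1} be a map such that g(x) = A · ω^{ik} · y^n whenever x = ω^i y with y ∈ μ_{(q+1)/d} and 0 ≤ i ≤ d-1, where A ∈ μ_{q+1} is fixed and k, n are fixed integers. Then g is a permutation of μ_{q+1} if and only if gcd(n, (q+1)/d) = 1 and gcd(k, d) = 1. -/
/-! Choose `e` with `e ≡ k [MOD d]` and `e ≡ n [MOD (q + 1) / d]` by the Chinese remainder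
theorem. Splitting `x = ω ^ i * y` then shows `g x = A * x ^ e` on `μ_{q+1}`, and
`gcd(e, q + 1) = 1` is equivalent to the two gcd conditions. Multiplication by `A` permutes
`μ_{q+1}`, and `x ↦ x ^ e` does iff `gcd(e, q + 1) = 1`: an inverse exponent modulo `q + 1` inverts
it, while a common prime `p` of `e` and `q + 1` divides `|F^*| = (q + 1)(q - 1)`, so by Cauchy
some `z ≠ 1` of order `p` lies in `μ_{q+1}` and has `z ^ e = 1`. -/

open Set

theorem Nat.exists_mul_modEq_one_of_coprime {e N : ℕ} (he : e.Coprime N) (hN : 0 < N) :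
    ∃ e', e * e' ≡ 1 [MOD N] := by
  obtain rfl | hN1 := (Nat.one_le_iff_ne_zero.2 hN.ne').eq_or_lt
  · exact ⟨0, Nat.modEq_one⟩
  · obtain ⟨e', -, he'⟩ := Nat.exists_mul_mod_eq_one_of_coprime he hN1
    exact ⟨e', he'.trans (Nat.mod_eq_of_lt hN1).symm⟩

theorem Nat.coprime_mul_iff_of_modEq {e k n d m : ℕ} (hk : e ≡ k [MOD d]) (hn : e ≡ n [MOD m]) :
    e.Coprime (d * m) ↔ n.Coprime m ∧ k.Coprime d := by
  rw [Nat.coprime_mul_iff_right, Nat.Coprime, Nat.Coprime, Nat.Coprime, Nat.Coprime, hk.gcd_eq,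
    hn.gcd_eq, and_comm]

theorem pow_pow_eq_one_of_dvd {M : Type*} [Monoid M] {N : ℕ} {x : M} (hx : x ^ N = 1) {c d : ℕ} (h : N ∣ c * d) :
    (x ^ c) ^ d = 1 := by
  obtain ⟨t, ht⟩ := h
  rw [← pow_mul, ht, pow_mul, hx, one_pow]

section CommMonoid

variable {M : Type*} [CommMonoid M] {N : ℕ}

theorem exists_mul_eq_of_pow_mul_eq_one {d m : ℕ} (hdm : d.Coprime m) {x : M}
    (hx : x ^ (d * m) = 1) : ∃ a b : M, a ^ d = 1 ∧ b ^ m = 1 ∧ a * b = x := by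
  obtain ⟨c, hc1, hc0⟩ := Nat.chineseRemainder hdm 1 0
  obtain ⟨c', hc'0, hc'1⟩ := Nat.chineseRemainder hdm 0 1
  have hsum : c + c' ≡ 1 [MOD d * m] :=
    (Nat.modEq_and_modEq_iff_modEq_mul hdm).1
      ⟨by simpa using hc1.add hc'0, by simpa using hc0.add hc'1⟩
  refine ⟨x ^ c, x ^ c', pow_pow_eq_one_of_dvd hx ?_, pow_pow_eq_one_of_dvd hx ?_, ?_⟩
  · rw [mul_comm c]
    exact Nat.mul_dvd_mul_left d (Nat.modEq_zero_iff_dvd.1 hc0)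
  · exact Nat.mul_dvd_mul_right (Nat.modEq_zero_iff_dvd.1 hc'0) m
  · rw [← pow_add, pow_eq_pow_of_modEq hsum hx, pow_one]

theorem bijOn_mul_pow_of_coprime (hN : 0 < N) {A : M} (hA : A ^ N = 1) {e : ℕ}
    (he : e.Coprime N) :
    BijOn (fun x ↦ A * x ^ e) {x : M | x ^ N = 1} {x : M | x ^ N = 1} := by
  obtain ⟨e', he'⟩ := Nat.exists_mul_modEq_one_of_coprime he hN
  have mul_mem {x y : M} (hx : x ^ N = 1) (hy : y ^ N = 1) : (x * y) ^ N = 1 := by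
    rw [mul_pow, hx, hy, one_mul]
  have pow_mem {x : M} (hx : x ^ N = 1) (j : ℕ) : (x ^ j) ^ N = 1 := by
    rw [pow_right_comm, hx, one_pow]
  have pow_pow_cancel {x : M} (hx : x ^ N = 1) {a b : ℕ} (hab : a * b ≡ 1 [MOD N]) :
      (x ^ a) ^ b = x := by
    rw [← pow_mul, pow_eq_pow_of_modEq hab hx, pow_one]
  have hA' : A ^ (N - 1) * A = 1 := by rw [← pow_succ, Nat.sub_add_cancel hN, hA]
  refine InvOn.bijOn (f' := fun y ↦ (A ^ (N - 1) * y) ^ e') ⟨fun x hx ↦ ?_, fun y hy ↦ ?_⟩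
    (fun x hx ↦ mul_mem hA (pow_mem hx e)) (fun y hy ↦ pow_mem (mul_mem (pow_mem hA _) hy) e')
  · simp only [← mul_assoc, hA', one_mul]
    exact pow_pow_cancel hx he'
  · dsimp only
    rw [pow_pow_cancel (mul_mem (pow_mem hA _) hy) ((mul_comm e' e).symm ▸ he'), ← mul_assoc,
      mul_comm A, hA', one_mul]

theorem exists_ne_one_pow_eq_one_of_not_coprime [Finite Mˣ] (hN : N ∣ Nat.card Mˣ) {e : ℕ}
    (he : ¬e.Coprime N) : ∃ z : M, z ≠ 1 ∧ z ^ N = 1 ∧ z ^ e = 1 := by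
  obtain ⟨p, hp, hpe, hpN⟩ := Nat.Prime.not_coprime_iff_dvd.1 he
  have := Fact.mk hp
  obtain ⟨z, hz⟩ := exists_prime_orderOf_dvd_card' p (hpN.trans hN)
  refine ⟨z, fun h ↦ hp.one_lt.ne' ?_, ?_, ?_⟩
  · rw [← hz, Units.val_eq_one.1 h, orderOf_one]
  · rw [← Units.val_pow_eq_pow_val, orderOf_dvd_iff_pow_eq_one.1 (hz ▸ hpN), Units.val_one]
  · rw [← Units.val_pow_eq_pow_val, orderOf_dvd_iff_pow_eq_one.1 (hz ▸ hpe), Units.val_one]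

theorem bijOn_mul_pow_iff_coprime [Finite Mˣ] (hN : N ∣ Nat.card Mˣ) {A : M} (hA : A ^ N = 1)
    (e : ℕ) :
    BijOn (fun x ↦ A * x ^ e) {x : M | x ^ N = 1} {x : M | x ^ N = 1} ↔ e.Coprime N := by
  refine ⟨fun hbij ↦ ?_, bijOn_mul_pow_of_coprime ?_ hA⟩
  · by_contra he
    obtain ⟨z, hz1, hzN, hze⟩ := exists_ne_one_pow_eq_one_of_not_coprime hN he
    exact hz1 (hbij.injOn hzN (one_pow N) (by simp only [hze, one_pow]))
  · exact Nat.pos_of_ne_zero fun h ↦ Nat.card_pos.ne' (zero_dvd_iff.1 (h ▸ hN))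

end CommMonoid

theorem eqOn_mul_pow_of_modEq {R : Type*} [CommRing R] [IsDomain R] {d m : ℕ} [NeZero d]
    {ω : R} (hω : IsPrimitiveRoot ω d) (hdm : d.Coprime m) {A : R} {k n e : ℕ}
    (hk : e ≡ k [MOD d]) (hn : e ≡ n [MOD m]) {g : R → R}
    (hg : ∀ i, i < d → ∀ y : R, y ^ m = 1 → g (ω ^ i * y) = A * ω ^ (i * k) * y ^ n) :
    EqOn g (fun x ↦ A * x ^ e) {x : R | x ^ (d * m) = 1} := by
  intro x hx
  obtain ⟨a, y, ha, hy, rfl⟩ := exists_mul_eq_of_pow_mul_eq_one hdm hx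
  obtain ⟨i, hi, rfl⟩ := hω.eq_pow_of_pow_eq_one ha
  dsimp only
  rw [hg i hi y hy, mul_pow, ← pow_mul, pow_eq_pow_of_modEq (hk.mul_left i) hω.pow_eq_one,
    pow_eq_pow_of_modEq hn hy, mul_assoc]

theorem stmt3_general (q : ℕ)
    (F : Type*) [Field F] [Fintype F] (hF : Fintype.card F = q ^ 2)
    (d : ℕ) (hdvd : d ∣ q + 1) (hcop : Nat.gcd d ((q + 1) / d) = 1)
    (ω : F) (hω : orderOf ω = d)
    (A : F) (hA : A ^ (q + 1) = 1) (k n : ℕ)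
    (g : F → F)
    (hg : ∀ i, i < d → ∀ y : F, y ^ ((q + 1) / d) = 1 →
      g (ω ^ i * y) = A * ω ^ (i * k) * y ^ n) :
    Set.BijOn g {x : F | x ^ (q + 1) = 1} {x : F | x ^ (q + 1) = 1} ↔
      Nat.gcd n ((q + 1) / d) = 1 ∧ Nat.gcd k d = 1 := by
  set m := (q + 1) / d
  have hdm : d * m = q + 1 := Nat.mul_div_cancel' hdvd
  have : NeZero d := ⟨by rintro rfl; simp at hdvd⟩
  have hunits : q + 1 ∣ Nat.card Fˣ := by
    rw [Nat.card_units, Nat.card_eq_fintype_card, hF, ← one_pow 2, Nat.sq_sub_sq]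
    exact dvd_mul_right _ _
  obtain ⟨e, hek, hen⟩ := Nat.chineseRemainder hcop k n
  have hform := eqOn_mul_pow_of_modEq (hω ▸ IsPrimitiveRoot.orderOf ω) hcop hek hen hg
  rw [hdm] at hform
  rw [hform.bijOn_iff, bijOn_mul_pow_iff_coprime hunits hA, ← hdm]
  exact Nat.coprime_mul_iff_of_modEq hek hen

theorem stmt3 (p pn q : ℕ) (hp : p.Prime) (hn : 0 < pn) (hq : q = p ^ pn)
    (F : Type*) [Field F] [Fintype F] (hF : Fintype.card F = q ^ 2)
    (d : ℕ) (hd : 0 < d) (hdvd : d ∣ q + 1) (hcop : Nat.gcd d ((q + 1) / d) = 1)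
    (ω : F) (hω : orderOf ω = d)
    (A : F) (hA : A ^ (q + 1) = 1) (k n : ℕ)
    (g : F → F)
    (hg : ∀ i, i < d → ∀ y : F, y ^ ((q + 1) / d) = 1 →
      g (ω ^ i * y) = A * ω ^ (i * k) * y ^ n) :
    Set.BijOn g {x : F | x ^ (q + 1) = 1} {x : F | x ^ (q + 1) = 1} ↔
      Nat.gcd n ((q + 1) / d) = 1 ∧ Nat.gcd k d = 1 :=
  stmt3_general q F hF d hdvd hcop ω hω A hA k n g hg
end

section
/- Let d be an even integer with q ≡ -1 (mod d), q ≡ 1 (mod 4), and gcd((q+1)/d, d) = 1. Let c ∈ F_{q^2} satisfy (c/2)^{(q+1)/2} = 1, let k be an odd integer, v = (q+1)/d, v_1 = (d-1)v, and h(x) = c + x^{v_1+k} + x^{qv+k}. Then f(x) = x^r h(x^{q-1}) is a permutation polynomial of F_{q^2} if and only if gcd(r-k, (q+1)/d) = 1, gcd(r, q-1) = 1, and gcd(s+r-k, d) = 1, where s is the integer with 1 ≤ s ≤ d and s ≡ (q+1)/d (mod d). -/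
/-!
For `x ≠ 0` the element `u = x ^ (q - 1)` is a `(q + 1)`-th root of unity. As `d v = q + 1`, the
two monomials of `h` agree at `u`, so `h u = 2 (c / 2 + t)` with `t = u ^ e`, `e = (d - 1) v + k`.
Since `e` is even and `(q + 1) / 2` is odd, `c / 2` and `t` are `(q + 1) / 2`-th roots of unity
whose sum cannot vanish, and the Frobenius identity `(a + t) ^ q = a⁻¹ + t⁻¹` for norm-one
`a, t` gives `f x ^ (q - 1) = (c / 2)⁻¹ u ^ (r - e)`.

In a cyclic group of order `n m`, a map `x ↦ x ^ r H (x ^ n)` whose `n`-th power is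
`C (x ^ n) ^ E` is bijective iff `gcd (r, n) = 1` and `gcd (E, m) = 1`. Here `n = q - 1` and
`m = q + 1 = d v`, and `gcd (r - e, d v) = 1` splits into the conditions modulo `v` and modulo `d`.
-/

open Function

section PowerTwistedMaps

variable {G : Type*} [CommGroup G] {n m r : ℕ} {E : ℤ} {C : G} {f : G → G}

theorem coprime_of_injective_of_div_pow_eq [Finite G] (hn : n ∣ Nat.card G)
    (hfib : ∀ x y : G, x ^ n = y ^ n → f x / x ^ r = f y / y ^ r) (hf : Injective f) :
    r.Coprime n := by
  by_contra h
  obtain ⟨ℓ, hℓ, hℓr, hℓn⟩ := Nat.Prime.not_coprime_iff_dvd.mp h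
  have := Fact.mk hℓ
  obtain ⟨α, hα⟩ := exists_prime_orderOf_dvd_card' ℓ (hℓn.trans hn)
  have hαn : α ^ n = 1 := orderOf_dvd_iff_pow_eq_one.mp (hα ▸ hℓn)
  have hαr : α ^ r = 1 := orderOf_dvd_iff_pow_eq_one.mp (hα ▸ hℓr)
  have hα1 : f α = f 1 := by simpa [hαr] using hfib α 1 (by rw [hαn, one_pow])
  exact hℓ.one_lt.ne' (hα ▸ orderOf_eq_one_iff.mpr (hf hα1))

theorem isCoprime_of_injective_of_pow_eq_mul_zpow [Finite G] [IsCyclic G]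
    (hcard : Nat.card G = n * m) (hr : r.Coprime n)
    (hfib : ∀ x y : G, x ^ n = y ^ n → f x / x ^ r = f y / y ^ r)
    (hpow : ∀ x : G, f x ^ n = C * (x ^ n) ^ E) (hf : Injective f) :
    IsCoprime E m := by
  by_contra h
  obtain ⟨ℓ, hℓ, hℓE, hℓm⟩ :=
    Nat.Prime.not_coprime_iff_dvd.mp (mt Int.isCoprime_iff_nat_coprime.mpr h)
  rw [Int.natAbs_natCast] at hℓm
  obtain ⟨ζ, hζ⟩ := IsCyclic.exists_generator (α := G)
  have hζ : orderOf ζ = n * m := by rw [orderOf_eq_card_of_forall_mem_zpowers hζ, hcard]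
  have hnm : n * m ≠ 0 := hcard ▸ Nat.card_pos.ne'
  -- `x ^ n` has prime order `ℓ ∣ gcd(E, m)`
  set x := ζ ^ (m / ℓ)
  have hxn : x ^ n = ζ ^ (n * (m / ℓ)) := by rw [← pow_mul, mul_comm]
  have hxn1 : x ^ n ≠ 1 := by
    rw [hxn]
    have hm : m / ℓ < m :=
      Nat.div_lt_self (Nat.pos_of_ne_zero (right_ne_zero_of_mul hnm)) hℓ.one_lt
    refine pow_ne_one_of_lt_orderOf ?_ (hζ ▸ Nat.mul_lt_mul_of_pos_left hm ?_)
    · exact mul_ne_zero (left_ne_zero_of_mul hnm)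
        (Nat.div_ne_zero_iff_of_dvd hℓm |>.mpr ⟨right_ne_zero_of_mul hnm, hℓ.ne_zero⟩)
    · exact Nat.pos_of_ne_zero (left_ne_zero_of_mul hnm)
  have hxnE : (x ^ n) ^ E = 1 := by
    have hxnℓ : (x ^ n) ^ ℓ = 1 := by
      rw [hxn, ← pow_mul, mul_assoc, Nat.div_mul_cancel hℓm, ← hζ, pow_orderOf_eq_one]
    exact orderOf_dvd_iff_zpow_eq_one.mp
      ((Int.natCast_dvd_natCast.mpr (orderOf_dvd_of_pow_eq_one hxnℓ)).trans
        (Int.natCast_dvd.mpr hℓE))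
  have hγ : (f x / f 1) ^ n = 1 := by
    rw [div_pow, hpow, hpow, hxnE, one_pow, one_zpow, div_self']
  obtain ⟨t, ht⟩ :=
    exists_pow_eq_self_of_coprime (hr.coprime_dvd_right (orderOf_dvd_of_pow_eq_one hγ))
  set y := (f x / f 1) ^ t
  have hyn : y ^ n = 1 := by rw [← pow_mul, mul_comm, pow_mul, hγ, one_pow]
  have hyr : y ^ r = f x / f 1 := by rw [← pow_mul, mul_comm, pow_mul, ht]
  have hxy : f y = f x := by
    have := hfib y 1 (by rw [hyn, one_pow])
    rwa [hyr, one_pow, div_one, div_eq_iff_eq_mul, mul_div_cancel] at this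
  exact hxn1 (hf hxy ▸ hyn)

theorem injective_of_coprime_of_pow_eq_mul_zpow (hexp : ∀ x : G, x ^ (n * m) = 1)
    (hr : r.Coprime n) (hE : IsCoprime E m)
    (hfib : ∀ x y : G, x ^ n = y ^ n → f x / x ^ r = f y / y ^ r)
    (hpow : ∀ x : G, f x ^ n = C * (x ^ n) ^ E) : Injective f := by
  intro x y hxy
  have hw : (x ^ n / y ^ n) ^ E = 1 := by
    have := congrArg (· ^ n) hxy
    simp only [hpow, mul_right_inj] at this
    rw [div_zpow, this, div_self']
  have hw' : (x ^ n / y ^ n) ^ m = 1 := by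
    rw [div_pow, ← pow_mul, ← pow_mul, hexp, hexp, div_self']
  have hxyn : x ^ n = y ^ n := by
    rw [← div_eq_one]
    obtain ⟨a, b, hab⟩ := hE
    rw [← zpow_one (x ^ n / y ^ n), ← hab, mul_comm a, mul_comm b, zpow_add, zpow_mul, zpow_mul,
      hw, zpow_natCast, hw', one_zpow, one_zpow, mul_one]
  have hxyr : x ^ r = y ^ r := by
    have := hfib x y hxyn
    rwa [hxy, div_right_inj] at this
  have hz := pow_gcd_eq_one.mpr
    ⟨(by rw [div_pow, hxyr, div_self'] : (x / y) ^ r = 1), by rw [div_pow, hxyn, div_self']⟩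
  rwa [hr, pow_one, div_eq_one] at hz

theorem bijective_iff_coprime_of_pow_eq_mul_zpow [Finite G] [IsCyclic G]
    (hcard : Nat.card G = n * m)
    (hfib : ∀ x y : G, x ^ n = y ^ n → f x / x ^ r = f y / y ^ r)
    (hpow : ∀ x : G, f x ^ n = C * (x ^ n) ^ E) :
    Bijective f ↔ r.Coprime n ∧ IsCoprime E m := by
  rw [← Finite.injective_iff_bijective]
  refine ⟨fun hf => ?_, fun ⟨hr, hE⟩ => injective_of_coprime_of_pow_eq_mul_zpow
    (fun x => hcard ▸ pow_card_eq_one') hr hE hfib hpow⟩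
  have hr := coprime_of_injective_of_div_pow_eq (Dvd.intro m hcard.symm) hfib hf
  exact ⟨hr, isCoprime_of_injective_of_pow_eq_mul_zpow hcard hr hfib hpow hf⟩

end PowerTwistedMaps

theorem bijective_iff_map_zero_and_units_bijective {K : Type*} [GroupWithZero K] [Finite K]
    {f : K → K} (hf : ∀ x : K, x ≠ 0 → f x ≠ 0) :
    Bijective f ↔ f 0 = 0 ∧ Bijective fun x : Kˣ => Units.mk0 (f x) (hf x x.ne_zero) := by
  rw [← Finite.injective_iff_bijective, ← Finite.injective_iff_bijective]
  constructor
  · intro hinj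
    refine ⟨?_, fun x y hxy => Units.ext (hinj (by simpa using congrArg Units.val hxy))⟩
    obtain ⟨a, ha⟩ := Finite.surjective_of_injective hinj 0
    obtain rfl : a = 0 := by_contra fun h => hf a h ha
    exact ha
  · rintro ⟨h0, hu⟩ x y hxy
    rcases eq_or_ne x 0 with rfl | hx <;> rcases eq_or_ne y 0 with rfl | hy
    · rfl
    · exact absurd (hxy.symm.trans h0) (hf y hy)
    · exact absurd (hxy.trans h0) (hf x hx)
    · exact congrArg Units.val (@hu (Units.mk0 x hx) (Units.mk0 y hy) (Units.ext hxy))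

theorem bijective_pow_mul_comp_pow_iff {K : Type*} [Field K] [Fintype K] {n m r e : ℕ} {C : K}
    {h : K → K} (hcard : Fintype.card K - 1 = n * m) (hn : 1 < n)
    (hh0 : ∀ x : K, x ≠ 0 → h (x ^ n) ≠ 0)
    (hhpow : ∀ x : K, x ≠ 0 → h (x ^ n) ^ n * (x ^ n) ^ e = C) :
    Bijective (fun x => x ^ r * h (x ^ n)) ↔ r.Coprime n ∧ IsCoprime ((r : ℤ) - e) m := by
  classical
  have hC : C ≠ 0 := by
    simpa [← hhpow 1 one_ne_zero] using pow_ne_zero n (hh0 1 one_ne_zero)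
  have hf : ∀ x : K, x ≠ 0 → x ^ r * h (x ^ n) ≠ 0 := fun x hx =>
    mul_ne_zero (pow_ne_zero r hx) (hh0 x hx)
  rw [bijective_iff_map_zero_and_units_bijective hf,
    bijective_iff_coprime_of_pow_eq_mul_zpow (r := r) (C := Units.mk0 C hC) (E := r - e)
      ?card ?fib ?pow]
  case card => rw [Nat.card_eq_fintype_card, Fintype.card_units, hcard]
  case fib =>
    intro x y hxy
    ext
    have hxy' : (x : K) ^ n = (y : K) ^ n := by simpa using congrArg Units.val hxy
    simp only [Units.val_div_eq_div_val, Units.val_mk0, Units.val_pow_eq_pow_val]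
    rw [mul_div_cancel_left₀ _ (pow_ne_zero r x.ne_zero),
      mul_div_cancel_left₀ _ (pow_ne_zero r y.ne_zero), hxy']
  case pow =>
    intro x
    ext
    simp only [Units.val_pow_eq_pow_val, Units.val_mk0, Units.val_mul, Units.val_zpow_eq_zpow_val]
    rw [← hhpow x x.ne_zero, zpow_sub₀ (pow_ne_zero n x.ne_zero), zpow_natCast, zpow_natCast]
    field_simp
    ring
  refine and_iff_right_of_imp fun ⟨hr, _⟩ => ?_
  have hr0 : r ≠ 0 := by rintro rfl; exact hn.ne' (Nat.coprime_zero_left n |>.mp hr)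
  simp [zero_pow hr0]

theorem add_ne_zero_of_pow_eq_one {R : Type*} [CommRing R] (h2 : (2 : R) ≠ 0) {m : ℕ}
    (hm : Odd m) {a t : R} (ha : a ^ m = 1) (ht : t ^ m = 1) : a + t ≠ 0 := by
  intro hat
  rw [eq_neg_of_add_eq_zero_right hat, hm.neg_pow, ha] at ht
  exact h2 (by linear_combination -ht)

section Frobenius

variable {K : Type*} [Field K] {p n q : ℕ} [ExpChar K p]

theorem add_pow_sub_one_eq_inv (hq : q = p ^ n) {a t : K} (ha : a ^ (q + 1) = 1)
    (ht : t ^ (q + 1) = 1) (hat : a + t ≠ 0) : (a + t) ^ (q - 1) = (a * t)⁻¹ := by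
  have ha0 : a ≠ 0 := by rintro rfl; simp at ha
  have ht0 : t ≠ 0 := by rintro rfl; simp at ht
  have hq0 : q ≠ 0 := hq ▸ (expChar_pow_pos K p n).ne'
  have hfrob : (a + t) ^ q = (a + t) * (a * t)⁻¹ := by
    rw [hq, add_pow_expChar_pow, ← hq,
      eq_inv_of_mul_eq_one_left (a := a ^ q) (by rwa [← pow_succ]),
      eq_inv_of_mul_eq_one_left (a := t ^ q) (by rwa [← pow_succ])]
    field_simp
    ring
  rw [← Nat.sub_add_cancel (Nat.one_le_iff_ne_zero.mpr hq0), pow_succ] at hfrob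
  exact mul_right_cancel₀ hat (hfrob.trans (mul_comm _ _))

theorem two_mul_add_pow_sub_one_mul_eq_inv (hq : q = p ^ n) (h2 : (2 : K) ≠ 0) {a t : K}
    (ha : a ^ (q + 1) = 1) (ht : t ^ (q + 1) = 1) (hat : a + t ≠ 0) :
    (2 * (a + t)) ^ (q - 1) * t = a⁻¹ := by
  have htwo : (2 : K) ^ (q - 1) = 1 := by
    have := add_pow_sub_one_eq_inv hq (one_pow _) (one_pow _) (one_add_one_eq_two (R := K) ▸ h2)
    rwa [one_add_one_eq_two, mul_one, inv_one] at this
  have ht0 : t ≠ 0 := by rintro rfl; simp at ht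
  rw [mul_pow, htwo, one_mul, add_pow_sub_one_eq_inv hq ha ht hat, mul_inv, mul_assoc,
    inv_mul_cancel₀ ht0, mul_one]

end Frobenius

theorem pow_mul_add_eq_of_pow_eq_one {M : Type*} [Monoid M] {u : M} {d v q k : ℕ}
    (hdv : d * v = q + 1) (hu : u ^ (q + 1) = 1) : u ^ (q * v + k) = u ^ ((d - 1) * v + k) := by
  obtain ⟨d, rfl⟩ : ∃ d', d = d' + 1 := ⟨d - 1, by grind⟩
  obtain ⟨v, rfl⟩ : ∃ v', v = v' + 1 := ⟨v - 1, by grind⟩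
  have : q * (v + 1) + k = (d * (v + 1) + k) + (q + 1) * v := by nlinarith
  rw [this, pow_add, pow_mul, hu, one_pow, mul_one, Nat.add_sub_cancel]

theorem pow_pow_div_two_eq_one {M : Type*} [Monoid M] {u : M} {e q : ℕ} (hq : q % 2 = 1)
    (he : Even e) (hu : u ^ (q + 1) = 1) : (u ^ e) ^ ((q + 1) / 2) = 1 := by
  obtain ⟨j, rfl⟩ := he
  have h2 : 2 * ((q + 1) / 2) = q + 1 := by omega
  rw [← pow_mul, ← two_mul, mul_right_comm, h2, pow_mul, hu, one_pow]

section Trinomial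

variable {K : Type*} [Field K] {q d k : ℕ} {c u : K}

def trinomial (c : K) (q d k : ℕ) (u : K) : K :=
  c + u ^ ((d - 1) * ((q + 1) / d) + k) + u ^ (q * ((q + 1) / d) + k)

theorem trinomial_eq_of_pow_eq_one (h2 : (2 : K) ≠ 0) (hdvd : d ∣ q + 1)
    (hu : u ^ (q + 1) = 1) :
    trinomial c q d k u = 2 * (c / 2 + u ^ ((d - 1) * ((q + 1) / d) + k)) := by
  rw [trinomial, pow_mul_add_eq_of_pow_eq_one (Nat.mul_div_cancel' hdvd) hu]
  field_simp
  ring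

theorem trinomial_ne_zero (h2 : (2 : K) ≠ 0) (hdvd : d ∣ q + 1) (hq4 : q % 4 = 1)
    (he : Even ((d - 1) * ((q + 1) / d) + k)) (hc : (c / 2) ^ ((q + 1) / 2) = 1)
    (hu : u ^ (q + 1) = 1) : trinomial c q d k u ≠ 0 := by
  rw [trinomial_eq_of_pow_eq_one h2 hdvd hu]
  exact mul_ne_zero h2 <| add_ne_zero_of_pow_eq_one h2 (Nat.odd_iff.mpr (by omega)) hc
    (pow_pow_div_two_eq_one (by omega) he hu)

theorem trinomial_pow_sub_one_mul {p n : ℕ} [ExpChar K p] (hq : q = p ^ n) (h2 : (2 : K) ≠ 0)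
    (hdvd : d ∣ q + 1) (hq4 : q % 4 = 1) (he : Even ((d - 1) * ((q + 1) / d) + k))
    (hc : (c / 2) ^ ((q + 1) / 2) = 1) (hu : u ^ (q + 1) = 1) :
    trinomial c q d k u ^ (q - 1) * u ^ ((d - 1) * ((q + 1) / d) + k) = (c / 2)⁻¹ := by
  have hcq : (c / 2) ^ (q + 1) = 1 := by
    rw [← Nat.two_mul_div_two_of_even (n := q + 1) (Nat.even_iff.mpr (by omega)), pow_mul', hc,
      one_pow]
  have htq : (u ^ ((d - 1) * ((q + 1) / d) + k)) ^ (q + 1) = 1 := by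
    rw [← pow_mul, mul_comm, pow_mul, hu, one_pow]
  have hne := trinomial_ne_zero h2 hdvd hq4 he hc hu
  rw [trinomial_eq_of_pow_eq_one h2 hdvd hu] at hne ⊢
  exact two_mul_add_pow_sub_one_mul_eq_inv hq h2 hcq htq (right_ne_zero_of_mul hne)

end Trinomial

theorem even_sub_one_mul_add {d v q k : ℕ} (hd : Even d) (hd0 : 0 < d) (hdv : d * v = q + 1)
    (hq4 : q % 4 = 1) (hk : Odd k) : Even ((d - 1) * v + k) := by
  have hv : Odd v := by
    refine Nat.not_even_iff_odd.mp fun hv => ?_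
    have : 4 ∣ d * v := mul_dvd_mul (even_iff_two_dvd.mp hd) (even_iff_two_dvd.mp hv)
    omega
  exact ((Nat.Even.sub_odd hd0 hd odd_one).mul hv).add_odd hk

theorem isCoprime_sub_mul_iff {a d v s : ℤ} (hs : d ∣ v - s) :
    IsCoprime (a - (d - 1) * v) (d * v) ↔ IsCoprime a v ∧ IsCoprime (s + a) d := by
  obtain ⟨w, hw⟩ := hs
  rw [IsCoprime.mul_right_iff, and_comm]
  have hd : a - (d - 1) * v = s + a + d * (w - v) := by linear_combination hw
  have hv : a - (d - 1) * v = a + v * (1 - d) := by ring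
  rw [hd, IsCoprime.add_mul_left_left_iff, ← hd, hv, IsCoprime.add_mul_left_left_iff]

theorem isCoprime_sub_iff_gcd_eq_one {q d v s r k : ℕ} (hd : 0 < d) (hdv : d * v = q + 1)
    (hs : s ≡ v [MOD d]) :
    IsCoprime ((r : ℤ) - ((d - 1) * v + k : ℕ)) (q + 1 : ℕ) ↔
      Int.gcd ((r : ℤ) - k) v = 1 ∧ Int.gcd ((s : ℤ) + r - k) d = 1 := by
  rw [← Int.isCoprime_iff_gcd_eq_one, ← Int.isCoprime_iff_gcd_eq_one, add_sub_assoc,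
    ← isCoprime_sub_mul_iff (Nat.ModEq.dvd hs), ← hdv]
  push_cast [Nat.cast_sub hd]
  ring_nf

theorem stmt6_general (p pn q : ℕ) (hp : p.Prime) (hpn : 0 < pn) (hq : q = p ^ pn)
    (F : Type*) [Field F] [Fintype F] (hF : Fintype.card F = q ^ 2)
    (d : ℕ) (hdeven : Even d) (hd : 0 < d) (hdvd : d ∣ q + 1) (hq4 : q % 4 = 1)
    (c : F) (hc : (c / 2) ^ ((q + 1) / 2) = 1)
    (k : ℕ) (hk : Odd k) (r : ℕ)
    (s : ℕ) (hsmod : s % d = ((q + 1) / d) % d) :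
    Function.Bijective (fun x : F => x ^ r *
      (c + (x ^ (q - 1)) ^ ((d - 1) * ((q + 1) / d) + k)
         + (x ^ (q - 1)) ^ (q * ((q + 1) / d) + k))) ↔
      (Int.gcd ((r : ℤ) - k) (((q + 1) / d : ℕ) : ℤ) = 1 ∧
        Nat.gcd r (q - 1) = 1 ∧
        Int.gcd ((s : ℤ) + r - k) (d : ℤ) = 1) := by
  have hq1 : 1 < q := hq ▸ Nat.one_lt_pow hpn.ne' hp.one_lt
  have := Fact.mk hp
  have := charP_of_card_eq_prime_pow (R := F) (p := p) (by rw [hF, hq, ← pow_mul])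
  have h2 : (2 : F) ≠ 0 := Ring.two_ne_zero fun h => by
    have := FiniteField.even_card_of_char_two h
    simp [hF, Nat.pow_mod, show q % 2 = 1 by omega] at this
  have hdv : d * ((q + 1) / d) = q + 1 := Nat.mul_div_cancel' hdvd
  have he := even_sub_one_mul_add hdeven hd hdv hq4 hk
  have hcard : Fintype.card F - 1 = (q - 1) * (q + 1) := by
    rw [hF, mul_comm, ← sq_tsub_sq, one_pow]
  have hnorm : ∀ x : F, x ≠ 0 → (x ^ (q - 1)) ^ (q + 1) = 1 := fun x hx => by
    rw [← pow_mul, ← hcard, FiniteField.pow_card_sub_one_eq_one x hx]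
  refine (bijective_pow_mul_comp_pow_iff (h := trinomial c q d k) (r := r) hcard (by omega)
    (fun x hx => trinomial_ne_zero h2 hdvd hq4 he hc (hnorm x hx))
    (fun x hx => trinomial_pow_sub_one_mul hq h2 hdvd hq4 he hc (hnorm x hx))).trans ?_
  rw [isCoprime_sub_iff_gcd_eq_one hd hdv hsmod, Nat.coprime_iff_gcd_eq_one]
  tauto

theorem stmt6 (p pn q : ℕ) (hp : p.Prime) (hpn : 0 < pn) (hq : q = p ^ pn)
    (F : Type*) [Field F] [Fintype F] (hF : Fintype.card F = q ^ 2)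
    (d : ℕ) (hdeven : Even d) (hd : 0 < d) (hdvd : d ∣ q + 1) (hq4 : q % 4 = 1)
    (hcop : Nat.gcd ((q + 1) / d) d = 1)
    (c : F) (hc : (c / 2) ^ ((q + 1) / 2) = 1)
    (k : ℕ) (hk : Odd k) (r : ℕ)
    (s : ℕ) (hs1 : 1 ≤ s) (hsd : s ≤ d) (hsmod : s % d = ((q + 1) / d) % d) :
    Function.Bijective (fun x : F => x ^ r *
      (c + (x ^ (q - 1)) ^ ((d - 1) * ((q + 1) / d) + k)
         + (x ^ (q - 1)) ^ (q * ((q + 1) / d) + k))) ↔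
      (Int.gcd ((r : ℤ) - k) (((q + 1) / d : ℕ) : ℤ) = 1 ∧
        Nat.gcd r (q - 1) = 1 ∧
        Int.gcd ((s : ℤ) + r - k) (d : ℤ) = 1) :=
  stmt6_general p pn q hp hpn hq F hF d hdeven hd hdvd hq4 c hc k hk r s hsmod
end

section
/- Let d be an odd integer with q ≡ -1 (mod d), q ≡ 1 (mod 4), and gcd((q+1)/d, d) = 1. Let c ∈ F_{q^2} satisfy (c/2)^{(q+1)/2} = 1, let k be an odd integer, u = (q+1)/d + 1, u_1 = (d-1)(q+1)/d + 1, and h(x) = c + x^{u_1+k} + x^{qu+2+k}. Then f(x) = x^r h(x^{q-1}) is a permutation polynomial of F_{q^2} if and only if gcd(r-k-1, (q+1)/d) = 1, gcd(r, q-1) = 1, and gcd(s+r-k-1, d) = 1, where s is the integer with 1 ≤ s ≤ d and s ≡ (q+1)/d (mod d). -/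
/-!
Write `μ = {ζ | ζ ^ (q + 1) = 1}` and `A = u₁ + k`, which is even. Since
`qu + 2 + k = A + (q + 1)/d · (q + 1)`, on `μ` the polynomial `h` is `c + 2ζ^A = 2 (c/2 + ζ^A)`,
twice a sum of two elements of `μ` (as `(c/2)^(q+1) = 1`) that cannot cancel because `(q + 1)/2`
is odd. Frobenius inverts elements of `μ`, which gives `ζ^A h(ζ)^(q-1) = 2^(q-1) / (c/2)`, a
constant. Hence `f(x)^(q-1)` is a constant times `ζ^(r-A)` for `ζ = x^(q-1)`, and `f` permutes
`F_{q²}` iff `gcd(r, q - 1) = 1` and `ζ ↦ ζ^(r-A)` permutes `μ`, i.e. `gcd(r - A, q + 1) = 1`.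
Splitting `q + 1 = (q + 1)/d · d` and reducing `r - A` modulo both factors gives the three
conditions.
-/

open Function

section Groups

variable {G : Type*}

theorem exists_ne_one_pow_eq_one_of_dvd_card [Group G] [Finite G] {t : ℕ}
    (ht : t ∣ Nat.card G) (ht1 : t ≠ 1) : ∃ g : G, g ≠ 1 ∧ g ^ t = 1 := by
  obtain ⟨ℓ, hℓ, hℓt⟩ := Nat.exists_prime_and_dvd ht1
  have := Fact.mk hℓ
  obtain ⟨g, hg⟩ := exists_prime_orderOf_dvd_card' ℓ (hℓt.trans ht)
  refine ⟨g, fun h1 => hℓ.one_lt.ne' ?_, orderOf_dvd_iff_pow_eq_one.mp (hg ▸ hℓt)⟩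
  rw [← hg, h1, orderOf_one]

theorem IsCyclic.exists_pow_eq_of_pow_eq_one [CommGroup G] [Finite G] [IsCyclic G] {m n : ℕ}
    (hG : Nat.card G = m * n) {ζ : G} (hζ : ζ ^ n = 1) : ∃ x : G, x ^ m = ζ := by
  have hm : 0 < m := Nat.pos_of_mul_pos_right (hG ▸ Nat.card_pos)
  have hle : (powMonoidHom m : G →* G).range ≤ (powMonoidHom n).ker := by
    rintro _ ⟨x, rfl⟩
    simp [← pow_mul, ← hG, pow_card_eq_one']
  have hcard :
      Nat.card (powMonoidHom n : G →* G).ker ≤ Nat.card (powMonoidHom m : G →* G).range := by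
    rw [IsCyclic.card_powMonoidHom_ker, IsCyclic.card_powMonoidHom_range, hG,
      Nat.gcd_mul_left_left, Nat.gcd_mul_right_left, Nat.mul_div_cancel_left _ hm]
  obtain ⟨x, hx⟩ : ζ ∈ (powMonoidHom m : G →* G).range :=
    (Subgroup.eq_of_le_of_card_ge hle hcard).symm ▸ (hζ : ζ ∈ (powMonoidHom n : G →* G).ker)
  exact ⟨x, hx⟩

theorem exists_pow_eq_of_pow_eq_one_of_coprime [Monoid G] {w : G} {r m : ℕ} (hw : w ^ m = 1)
    (hrm : r.Coprime m) : ∃ ε : G, ε ^ m = 1 ∧ ε ^ r = w := by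
  obtain ⟨j, hj⟩ :=
    exists_pow_eq_self_of_coprime (hrm.coprime_dvd_right (orderOf_dvd_of_pow_eq_one hw))
  exact ⟨w ^ j, by rw [← pow_mul, mul_comm, pow_mul, hw, one_pow],
    by rw [← pow_mul, mul_comm, pow_mul, hj]⟩

theorem eq_one_of_pow_eq_pow_of_intGCD_eq_one [Group G] {ρ : G} {n r A : ℕ} (hn : ρ ^ n = 1)
    (hrA : ρ ^ r = ρ ^ A) (hgcd : Int.gcd ((r : ℤ) - A) n = 1) : ρ = 1 := by
  have h := (pow_intGCD_eq_one (a := ρ) (m := (r : ℤ) - A) (n := n)).mpr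
    ⟨by rw [zpow_sub, zpow_natCast, zpow_natCast, hrA, mul_inv_cancel], by rwa [zpow_natCast]⟩
  rwa [hgcd, pow_one] at h

end Groups

theorem injective_of_injOn_compl_zero {α β : Type*} [Zero α] [Zero β] {f : α → β}
    (hinj : Set.InjOn f {0}ᶜ) (h0 : ∀ x, f x = 0 ↔ x = 0) : Injective f := by
  intro x y hxy
  rcases eq_or_ne x 0 with rfl | hx
  · exact ((h0 y).mp (hxy ▸ (h0 0).mpr rfl)).symm
  rcases eq_or_ne y 0 with rfl | hy
  · exact (h0 x).mp (hxy.trans ((h0 0).mpr rfl))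
  exact hinj hx hy hxy

section PermutationCriterion

variable {F : Type*} [Field F] [Fintype F] {m n r A : ℕ} {h f : F → F} {a : F}

theorem pow_pow_eq_one_of_card_eq (hcard : Fintype.card F = m * n + 1) {x : F} (hx : x ≠ 0) :
    (x ^ m) ^ n = 1 := by
  rw [← pow_mul, ← FiniteField.pow_card_sub_one_eq_one x hx, hcard, Nat.add_sub_cancel]

theorem apply_pow_ne_zero (hcard : Fintype.card F = m * n + 1) (hm : m ≠ 0) (ha : a ≠ 0)
    (hrel : ∀ ζ : F, ζ ^ n = 1 → ζ ^ A * h ζ ^ m = a) {x : F} (hx : x ≠ 0) : h (x ^ m) ≠ 0 := by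
  intro h0
  have key := hrel _ (pow_pow_eq_one_of_card_eq hcard hx)
  rw [h0, zero_pow hm, mul_zero] at key
  exact ha key.symm

theorem pow_pow_mul_pow_eq_of_comp_pow (hcard : Fintype.card F = m * n + 1)
    (hf : ∀ x, f x = x ^ r * h (x ^ m)) (hrel : ∀ ζ : F, ζ ^ n = 1 → ζ ^ A * h ζ ^ m = a)
    {x : F} (hx : x ≠ 0) : (x ^ m) ^ A * f x ^ m = a * (x ^ m) ^ r := by
  rw [← hrel _ (pow_pow_eq_one_of_card_eq hcard hx), hf, mul_pow, ← pow_mul x r m, mul_comm r m,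
    pow_mul]
  ring

theorem coprime_of_injOn_comp_pow (hm : m ∣ Fintype.card F - 1)
    (hf : ∀ x, f x = x ^ r * h (x ^ m)) (hinj : Set.InjOn f {0}ᶜ) : r.Coprime m := by
  by_contra hne
  have hdvd : r.gcd m ∣ Nat.card Fˣ := by
    rw [Nat.card_units, Nat.card_eq_fintype_card]
    exact (Nat.gcd_dvd_right r m).trans hm
  obtain ⟨ε, hε1, hεt⟩ := exists_ne_one_pow_eq_one_of_dvd_card hdvd hne
  obtain ⟨hεr, hεm⟩ := pow_gcd_eq_one.mp hεt
  have hfε : f ε = f 1 := by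
    rw [hf, hf, ← Units.val_pow_eq_pow_val, ← Units.val_pow_eq_pow_val, hεr, hεm]
    simp
  exact hε1 (Units.val_eq_one.mp (hinj ε.ne_zero one_ne_zero hfε))

theorem intGCD_eq_one_of_injOn_comp_pow (hcard : Fintype.card F = m * n + 1)
    (ha : a ≠ 0) (hf : ∀ x, f x = x ^ r * h (x ^ m))
    (hrel : ∀ ζ : F, ζ ^ n = 1 → ζ ^ A * h ζ ^ m = a)
    (hinj : Set.InjOn f {0}ᶜ) (hrm : r.Coprime m) :
    Int.gcd ((r : ℤ) - A) n = 1 := by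
  by_contra hne
  have hcardU : Nat.card Fˣ = m * n := by
    rw [Nat.card_units, Nat.card_eq_fintype_card, hcard, Nat.add_sub_cancel]
  have hm : m ≠ 0 := by
    rintro rfl
    exact (Nat.card_pos (α := Fˣ)).ne' (by rw [hcardU, zero_mul])
  obtain ⟨ζ, hζ1, hζt⟩ := exists_ne_one_pow_eq_one_of_dvd_card
    ((Int.gcd_dvd_natAbs_right _ _).trans (hcardU ▸ dvd_mul_left n m)) hne
  obtain ⟨hζrA, hζn⟩ := pow_intGCD_eq_one.mp hζt
  have hζr : (ζ : F) ^ r = (ζ : F) ^ A := by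
    rw [zpow_sub, zpow_natCast, zpow_natCast, mul_inv_eq_one] at hζrA
    exact_mod_cast congrArg Units.val hζrA
  obtain ⟨x, hx⟩ := IsCyclic.exists_pow_eq_of_pow_eq_one hcardU (zpow_natCast ζ n ▸ hζn)
  have hxm : (x : F) ^ m = ζ := by exact_mod_cast congrArg Units.val hx
  have hfx : f x ^ m = a := by
    have key := pow_pow_mul_pow_eq_of_comp_pow hcard hf hrel x.ne_zero
    rw [hxm, hζr, mul_comm a] at key
    exact mul_left_cancel₀ (pow_ne_zero _ ζ.ne_zero) key
  have hf1 : f 1 ^ m = a := by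
    simpa using pow_pow_mul_pow_eq_of_comp_pow hcard hf hrel one_ne_zero
  have hf1ne : f 1 ≠ 0 := fun h0 => ha (by rw [← hf1, h0, zero_pow hm])
  obtain ⟨ε, hεm, hεr⟩ := exists_pow_eq_of_pow_eq_one_of_coprime
    (w := f x / f 1) (by rw [div_pow, hfx, hf1, div_self ha]) hrm
  have hfε : f ε = f x := by
    have hh1 : h 1 = f 1 := by simp [hf]
    rw [hf ε, hεm, hεr, hh1, div_mul_cancel₀ _ hf1ne]
  have hε0 : ε ≠ 0 := by rintro rfl; simp [hm] at hεm
  have hεx : ε = x := hinj hε0 x.ne_zero hfε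
  exact hζ1 (Units.val_eq_one.mp (by rw [← hxm, ← hεx, hεm]))

theorem injOn_comp_pow_of_coprime (hcard : Fintype.card F = m * n + 1) (hm : m ≠ 0) (ha : a ≠ 0)
    (hf : ∀ x, f x = x ^ r * h (x ^ m)) (hrel : ∀ ζ : F, ζ ^ n = 1 → ζ ^ A * h ζ ^ m = a)
    (hrm : r.Coprime m) (hrA : Int.gcd ((r : ℤ) - A) n = 1) : Set.InjOn f {0}ᶜ := by
  intro x₁ hx₁ x₂ hx₂ hfx
  simp only [Set.mem_compl_iff, Set.mem_singleton_iff] at hx₁ hx₂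
  have e₁ := pow_pow_mul_pow_eq_of_comp_pow hcard hf hrel hx₁
  have e₂ := pow_pow_mul_pow_eq_of_comp_pow hcard hf hrel hx₂
  rw [hfx] at e₁
  have hxm : x₁ ^ m = x₂ ^ m := by
    set ρ : Fˣ := Units.mk0 x₁ hx₁ ^ m / Units.mk0 x₂ hx₂ ^ m with hρ
    have hρn : ρ ^ n = 1 := by
      ext
      simp [hρ, div_pow, pow_pow_eq_one_of_card_eq hcard hx₁,
        pow_pow_eq_one_of_card_eq hcard hx₂]
    have hρrA : ρ ^ r = ρ ^ A := by
      ext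
      simp only [hρ, Units.val_pow_eq_pow_val, Units.val_div_eq_div_val, Units.val_mk0, div_pow]
      rw [div_eq_div_iff (pow_ne_zero _ (pow_ne_zero _ hx₂)) (pow_ne_zero _ (pow_ne_zero _ hx₂))]
      refine mul_left_cancel₀ ha ?_
      linear_combination (x₁ ^ m) ^ A * e₂ - (x₂ ^ m) ^ A * e₁
    have hρ1 := eq_one_of_pow_eq_pow_of_intGCD_eq_one hρn hρrA hrA
    rw [hρ, div_eq_one] at hρ1
    simpa using congrArg Units.val hρ1
  have hxr : x₁ ^ r = x₂ ^ r := by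
    rw [hf, hf, hxm] at hfx
    exact mul_right_cancel₀ (apply_pow_ne_zero hcard hm ha hrel hx₂) hfx
  have hx1 : x₁ / x₂ = 1 := (pow_eq_one_iff_of_coprime hrm).mp
    ⟨by rw [div_pow, hxr, div_self (pow_ne_zero _ hx₂)],
      by rw [div_pow, hxm, div_self (pow_ne_zero _ hx₂)]⟩
  exact (div_eq_one_iff_eq hx₂).mp hx1

theorem bijective_comp_pow_iff (hcard : Fintype.card F = m * n + 1) (hm : 1 < m) (ha : a ≠ 0)
    (hf : ∀ x, f x = x ^ r * h (x ^ m)) (hrel : ∀ ζ : F, ζ ^ n = 1 → ζ ^ A * h ζ ^ m = a) :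
    Bijective f ↔ r.Coprime m ∧ Int.gcd ((r : ℤ) - A) n = 1 := by
  constructor
  · intro hbij
    have hinj : Set.InjOn f {0}ᶜ := hbij.injective.injOn
    have hrm := coprime_of_injOn_comp_pow ⟨n, by rw [hcard, Nat.add_sub_cancel]⟩ hf hinj
    exact ⟨hrm, intGCD_eq_one_of_injOn_comp_pow hcard ha hf hrel hinj hrm⟩
  · rintro ⟨hrm, hrA⟩
    have hr : r ≠ 0 := by
      rintro rfl
      exact hm.ne' (Nat.coprime_zero_left _ |>.mp hrm)
    refine Finite.injective_iff_bijective.mp (injective_of_injOn_compl_zero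
      (injOn_comp_pow_of_coprime hcard (by omega) ha hf hrel hrm hrA) fun x => ?_)
    rw [hf, mul_eq_zero, pow_eq_zero_iff hr, or_iff_left_iff_imp]
    intro h0
    by_contra hx
    exact apply_pow_ne_zero hcard (by omega) ha hrel hx h0

end PermutationCriterion

theorem Int.gcd_mul_eq_one_iff_of_modEq {z z₁ z₂ : ℤ} {e d : ℕ} (h₁ : z ≡ z₁ [ZMOD e])
    (h₂ : z ≡ z₂ [ZMOD d]) :
    Int.gcd z (e * d : ℕ) = 1 ↔ Int.gcd z₁ e = 1 ∧ Int.gcd z₂ d = 1 := by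
  have hcop : ∀ {w w' : ℤ} {N : ℕ}, w ≡ w' [ZMOD N] → (IsCoprime w N ↔ IsCoprime w' N) := by
    intro w w' N hw
    obtain ⟨t, ht⟩ := hw.dvd
    rw [show w' = w + N * t by linarith, IsCoprime.add_mul_left_left_iff]
  simp only [← Int.isCoprime_iff_gcd_eq_one, Nat.cast_mul, IsCoprime.mul_right_iff,
    hcop h₁, hcop h₂]

section UnitCircle

variable {R : Type*} [CommRing R] {u v : R}

theorem add_ne_zero_of_pow_eq_one_s7 {N : ℕ} (hN : Odd N) (h2 : (2 : R) ≠ 0) (hv : v ^ N = 1)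
    (hu : u ^ N = 1) : v + u ≠ 0 := by
  intro h
  rw [eq_neg_of_add_eq_zero_right h, hN.neg_pow, hv] at hu
  exact h2 (by linear_combination -hu)

theorem mul_mul_add_pow_sub_one_eq_one [IsDomain R] {p : ℕ} [Fact p.Prime] [CharP R p] {q j : ℕ}
    (hq : q = p ^ j) (hv : v ^ (q + 1) = 1) (hu : u ^ (q + 1) = 1) (hne : v + u ≠ 0) :
    v * u * (v + u) ^ (q - 1) = 1 := by
  subst hq
  apply mul_right_cancel₀ hne
  rw [mul_assoc, pow_sub_one_mul (pow_ne_zero _ (Fact.out : p.Prime).ne_zero), add_pow_char_pow]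
  linear_combination u * hv + v * hu

end UnitCircle

theorem mul_add_one_add_two_add_eq {d e k q : ℕ} (hd : 1 ≤ d) (hed : e * d = q + 1) :
    q * (e + 1) + 2 + k = (d - 1) * e + 1 + k + e * (q + 1) := by
  zify [hd] at hed ⊢
  linear_combination -hed

theorem intGCD_sub_eq_one_iff {d e k r s : ℕ} (hd : 1 ≤ d) (hs : s % d = e % d) :
    Int.gcd ((r : ℤ) - ((d - 1) * e + 1 + k : ℕ)) (e * d : ℕ) = 1 ↔
      Int.gcd ((r : ℤ) - k - 1) e = 1 ∧ Int.gcd ((s : ℤ) + r - k - 1) d = 1 := by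
  obtain ⟨t, ht⟩ : (d : ℤ) ∣ e - s := Nat.modEq_iff_dvd.mp hs
  refine Int.gcd_mul_eq_one_iff_of_modEq (Int.modEq_iff_dvd.mpr ⟨d - 1, ?_⟩)
    (Int.modEq_iff_dvd.mpr ⟨e - t, ?_⟩)
  · push_cast [Nat.cast_sub hd]; ring
  · push_cast [Nat.cast_sub hd]; linear_combination -ht

theorem pow_mul_add_pow_add_pow_pow_sub_one_eq {F : Type*} [Field F] {p : ℕ} [Fact p.Prime]
    [CharP F p] {q j A e : ℕ} (hq : q = p ^ j) (hq4 : q % 4 = 1) (h2 : (2 : F) ≠ 0) {c ζ : F}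
    (hc : (c / 2) ^ ((q + 1) / 2) = 1) (hA : Even A) (hζ : ζ ^ (q + 1) = 1) :
    ζ ^ A * (c + ζ ^ A + ζ ^ (A + e * (q + 1))) ^ (q - 1) = 2 ^ (q - 1) / (c / 2) := by
  have hN : Odd ((q + 1) / 2) := ⟨(q - 1) / 4, by omega⟩
  have hN2 : (q + 1) / 2 * 2 = q + 1 := by omega
  have hv0 : c / 2 ≠ 0 := ne_zero_pow hN.pos.ne' (hc ▸ one_ne_zero)
  obtain ⟨a, rfl⟩ := hA
  have hu : (ζ ^ (a + a)) ^ ((q + 1) / 2) = 1 := by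
    rw [← pow_mul, ← two_mul, mul_comm 2, mul_assoc, mul_comm 2, hN2, pow_mul', hζ, one_pow]
  have hmerge : c + ζ ^ (a + a) + ζ ^ (a + a + e * (q + 1)) = 2 * (c / 2 + ζ ^ (a + a)) := by
    rw [pow_add _ (a + a), pow_mul', hζ, one_pow, mul_one, mul_add, mul_div_cancel₀ c h2]
    ring
  have key := mul_mul_add_pow_sub_one_eq_one hq (by rw [← hN2, pow_mul, hc, one_pow])
    (by rw [← hN2, pow_mul, hu, one_pow]) (add_ne_zero_of_pow_eq_one_s7 hN h2 hc hu)
  rw [hmerge, mul_pow, eq_div_iff hv0]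
  linear_combination 2 ^ (q - 1) * key

theorem stmt7_general (p pn q : ℕ) (hp : p.Prime) (hq : q = p ^ pn)
    (F : Type*) [Field F] [Fintype F] (hF : Fintype.card F = q ^ 2)
    (d : ℕ) (hdodd : Odd d) (hdvd : d ∣ q + 1) (hq4 : q % 4 = 1)
    (c : F) (hc : (c / 2) ^ ((q + 1) / 2) = 1)
    (k : ℕ) (hk : Odd k) (r : ℕ)
    (s : ℕ) (hsmod : s % d = ((q + 1) / d) % d) :
    Function.Bijective (fun x : F => x ^ r *
      (c + (x ^ (q - 1)) ^ ((d - 1) * ((q + 1) / d) + 1 + k)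
         + (x ^ (q - 1)) ^ (q * ((q + 1) / d + 1) + 2 + k))) ↔
      (Int.gcd ((r : ℤ) - k - 1) (((q + 1) / d : ℕ) : ℤ) = 1 ∧
        Nat.gcd r (q - 1) = 1 ∧
        Int.gcd ((s : ℤ) + r - k - 1) (d : ℤ) = 1) := by
  have := Fact.mk hp
  have : CharP F p := charP_of_card_eq_prime_pow (by rw [hF, hq, ← pow_mul])
  have hq3 : 3 ≤ q := by
    have : 1 < q := by nlinarith [hF ▸ Fintype.one_lt_card (α := F)]
    omega
  have hcard : Fintype.card F = (q - 1) * (q + 1) + 1 := by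
    rw [hF]; zify [(by omega : 1 ≤ q)]; ring
  have h2 : (2 : F) ≠ 0 := Ring.two_ne_zero fun h => by
    simpa [hF, Nat.pow_mod, show q % 2 = 1 by omega] using FiniteField.even_card_of_char_two h
  have hv0 : c / 2 ≠ 0 := ne_zero_pow (by omega) (hc ▸ one_ne_zero)
  have hAeven : Even ((d - 1) * ((q + 1) / d) + 1 + k) :=
    ((Nat.Odd.sub_odd hdodd odd_one).mul_right _).add_odd odd_one |>.add_odd hk
  set e := (q + 1) / d
  have hed : e * d = q + 1 := Nat.div_mul_cancel hdvd
  rw [mul_add_one_add_two_add_eq hdodd.pos hed,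
    bijective_comp_pow_iff hcard (by omega) (div_ne_zero (pow_ne_zero _ h2) hv0) (fun x => rfl)
      fun ζ hζ => pow_mul_add_pow_add_pow_pow_sub_one_eq hq hq4 h2 hc hAeven hζ,
    ← hed, intGCD_sub_eq_one_iff hdodd.pos hsmod, Nat.coprime_iff_gcd_eq_one]
  tauto

theorem stmt7 (p pn q : ℕ) (hp : p.Prime) (hpn : 0 < pn) (hq : q = p ^ pn)
    (F : Type*) [Field F] [Fintype F] (hF : Fintype.card F = q ^ 2)
    (d : ℕ) (hdodd : Odd d) (hd : 0 < d) (hdvd : d ∣ q + 1) (hq4 : q % 4 = 1)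
    (hcop : Nat.gcd ((q + 1) / d) d = 1)
    (c : F) (hc : (c / 2) ^ ((q + 1) / 2) = 1)
    (k : ℕ) (hk : Odd k) (r : ℕ)
    (s : ℕ) (hs1 : 1 ≤ s) (hsd : s ≤ d) (hsmod : s % d = ((q + 1) / d) % d) :
    Function.Bijective (fun x : F => x ^ r *
      (c + (x ^ (q - 1)) ^ ((d - 1) * ((q + 1) / d) + 1 + k)
         + (x ^ (q - 1)) ^ (q * ((q + 1) / d + 1) + 2 + k))) ↔
      (Int.gcd ((r : ℤ) - k - 1) (((q + 1) / d : ℕ) : ℤ) = 1 ∧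
        Nat.gcd r (q - 1) = 1 ∧
        Int.gcd ((s : ℤ) + r - k - 1) (d : ℤ) = 1) :=
  stmt7_general p pn q hp hq F hF d hdodd hdvd hq4 c hc k hk r s hsmod
end

section
/- Let d divide q+1, let c ∈ F_{q^2}^*, u = (q+1)/d + 1, u_1 = (d-1)(q+1)/d + 1, and k any integer. Set h(x) = c + x^{u_1+k} - x^{qu+2+k}. Then f(x) = x^r h(x^{q-1}) is a permutation polynomial of F_{q^2} if and only if gcd(r, q^2 - 1) = 1. -/
theorem stmt9 (p pn q : ℕ) (hp : p.Prime) (hpn : 0 < pn) (hq : q = p ^ pn)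
    (hodd : Odd q)
    (F : Type*) [Field F] [Fintype F] (hF : Fintype.card F = q ^ 2)
    (d : ℕ) (hd : 0 < d) (hdvd : d ∣ q + 1)
    (c : F) (hc : c ≠ 0) (k r : ℕ) :
    Function.Bijective (fun x : F => x ^ r *
      (c + (x ^ (q - 1)) ^ ((d - 1) * ((q + 1) / d) + 1 + k)
         - (x ^ (q - 1)) ^ (q * ((q + 1) / d + 1) + 2 + k))) ↔
      Nat.gcd r (q ^ 2 - 1) = 1 := by
  have hq2 : 2 ≤ q := by
    rw [hq]
    calc 2 = 2 ^ 1 := (pow_one 2).symm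
    _ ≤ p ^ pn := Nat.pow_le_pow_left hp.two_le 1 |>.trans (Nat.pow_le_pow_right hp.pos hpn)
  have hq3 : 3 ≤ q := by
    rcases Nat.lt_or_ge q 3 with h | h
    · interval_cases q
      · exact absurd hodd (by decide)
    · exact h
  -- arithmetic setup
  obtain ⟨m, hm⟩ := hdvd
  have hdiv : (q + 1) / d = m := by rw [hm, Nat.mul_div_cancel_left _ hd]
  rw [hdiv]
  have hm1 : 1 ≤ m := by
    rcases Nat.eq_zero_or_pos m with rfl | h
    · simp at hm
    · exact h
  set e1 := (d - 1) * m + 1 + k with he1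
  set e2 := q * (m + 1) + 2 + k with he2
  have hkey : e1 + (q + 1) * m = e2 := by
    obtain ⟨d', rfl⟩ : ∃ d', d = d' + 1 := ⟨d - 1, by omega⟩
    have hm' : q + 1 = d' * m + m := by rw [hm]; ring
    have h1 : (q + 1) * m = q * m + m := by ring
    have h2 : (d' + 1 - 1) * m = d' * m := by simp
    rw [he1, he2, h1, h2]
    have h3 : q * (m + 1) = q * m + q := by ring
    rw [h3]
    omega
  have hsq : (q - 1) * (q + 1) = q ^ 2 - 1 := by
    obtain ⟨q', rfl⟩ : ∃ q', q = q' + 1 := ⟨q - 1, by omega⟩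
    have h : 1 ≤ (q' + 1) ^ 2 := Nat.one_le_pow _ _ (by omega)
    simp only [Nat.add_sub_cancel]
    zify [h]
    ring
  -- card of units
  classical
  have hcardU : Nat.card Fˣ = q ^ 2 - 1 := by
    rw [Nat.card_eq_fintype_card, Fintype.card_units, hF]
  -- for x ≠ 0, the bracket is c
  have hbracket : ∀ x : F, x ≠ 0 →
      c + (x ^ (q - 1)) ^ e1 - (x ^ (q - 1)) ^ e2 = c := by
    intro x hx
    have hx1 : x ^ (q ^ 2 - 1) = 1 := by
      rw [← hF]; exact FiniteField.pow_card_sub_one_eq_one x hx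
    have hone : (x ^ (q - 1)) ^ (q + 1) = 1 := by
      rw [← pow_mul, hsq, hx1]
    have : (x ^ (q - 1)) ^ e2 = (x ^ (q - 1)) ^ e1 := by
      rw [← hkey, pow_add, pow_mul, hone, one_pow, mul_one]
    rw [this, add_sub_cancel_right]
  -- value of the function
  set f := fun x : F => x ^ r * (c + (x ^ (q - 1)) ^ e1 - (x ^ (q - 1)) ^ e2) with hf
  have hfval : ∀ x : F, x ≠ 0 → f x = c * x ^ r := by
    intro x hx
    rw [hf]; dsimp only
    rw [hbracket x hx, mul_comm]
  constructor
  · -- bijective → gcd = 1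
    intro hbij
    by_contra hg
    set g := Nat.gcd r (q ^ 2 - 1) with hgdef
    have hgdvd : g ∣ q ^ 2 - 1 := Nat.gcd_dvd_right _ _
    have hgr : g ∣ r := Nat.gcd_dvd_left _ _
    have hq9 : 9 ≤ q ^ 2 := by nlinarith
    have hn1 : 2 ≤ q ^ 2 - 1 := by omega
    have hg1 : 1 ≤ g := Nat.pos_of_dvd_of_pos hgdvd (by omega)
    have hg2 : 2 ≤ g := by omega
    obtain ⟨g0, hg0⟩ := IsCyclic.exists_generator (α := Fˣ)
    have hord : orderOf g0 = q ^ 2 - 1 := by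
      rw [orderOf_eq_card_of_forall_mem_zpowers hg0, hcardU]
    set n := q ^ 2 - 1 with hn
    set ζ : Fˣ := g0 ^ (n / g) with hζ
    have hζr : ζ ^ r = 1 := by
      rw [hζ, ← pow_mul, ← orderOf_dvd_iff_pow_eq_one, hord]
      obtain ⟨r', hr'⟩ := hgr
      obtain ⟨n', hn'⟩ := hgdvd
      refine ⟨r', ?_⟩
      rw [hr', hn', Nat.mul_div_cancel_left _ (by omega : 0 < g)]
      ring
    have hζne : ζ ≠ 1 := by
      rw [hζ, Ne, ← orderOf_dvd_iff_pow_eq_one, hord]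
      intro hdvd'
      have h1 : 1 ≤ n / g := Nat.one_le_div_iff (by omega) |>.mpr (Nat.le_of_dvd (by omega) hgdvd)
      have h2 : n / g < n := Nat.div_lt_self (by omega) hg2
      have := Nat.le_of_dvd (by omega) hdvd'
      omega
    have heq : f (ζ : F) = f 1 := by
      rw [hfval _ (Units.ne_zero ζ), hfval 1 one_ne_zero]
      have : (ζ : F) ^ r = 1 := by
        rw [← Units.val_pow_eq_pow_val, hζr, Units.val_one]
      rw [this, one_pow]
    have := hbij.1 heq
    exact hζne (Units.ext (by simpa using this))
  · -- gcd = 1 → bijective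
    intro hgcd
    have hr0 : r ≠ 0 := by
      intro h
      rw [h] at hgcd
      simp only [Nat.gcd_zero_left] at hgcd
      have hq9 : 9 ≤ q ^ 2 := by nlinarith
      omega
    have hcop : (Nat.card Fˣ).Coprime r := by
      rw [hcardU, Nat.Coprime, Nat.gcd_comm]; exact hgcd
    have hpowbij : Function.Bijective (· ^ r : Fˣ → Fˣ) := hcop.pow_left_bijective
    have hfall : ∀ x : F, f x = c * x ^ r := by
      intro x
      rcases eq_or_ne x 0 with rfl | hx
      · rw [hf]; dsimp only
        rw [zero_pow hr0, zero_pow (by omega : q - 1 ≠ 0),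
          zero_pow (by omega : e1 ≠ 0), zero_pow (by omega : e2 ≠ 0)]
        ring
      · exact hfval x hx
    rw [show f = fun x => c * x ^ r from funext hfall]
    constructor
    · intro x y hxy
      dsimp only at hxy
      have hxy' : x ^ r = y ^ r := mul_left_cancel₀ hc hxy
      rcases eq_or_ne x 0 with rfl | hx
      · rw [zero_pow hr0, eq_comm, pow_eq_zero_iff hr0] at hxy'
        exact hxy'.symm
      rcases eq_or_ne y 0 with rfl | hy
      · rw [zero_pow hr0, pow_eq_zero_iff hr0] at hxy'
        exact hxy'
      · have : (Units.mk0 x hx) ^ r = (Units.mk0 y hy) ^ r := by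
          ext; simpa using hxy'
        have := hpowbij.1 this
        simpa [Units.ext_iff] using this
    · intro y
      rcases eq_or_ne y 0 with rfl | hy
      · exact ⟨0, by simp [zero_pow hr0]⟩
      · obtain ⟨u, hu⟩ := hpowbij.2 (Units.mk0 (c⁻¹ * y) (by simp [hc, hy]))
        dsimp only at hu
        refine ⟨(u : F), ?_⟩
        have : (u : F) ^ r = c⁻¹ * y := by
          rw [← Units.val_pow_eq_pow_val, hu, Units.val_mk0]
        dsimp only
        rw [this, ← mul_assoc, mul_inv_cancel₀ hc, one_mul]
end

section
/- Let q ≡ 3 (mod 8) be a prime power, let ω ∈ F_{q^2} be a primitive 4th root of unity, and let u = (q+5)/4 = (q+1)/4 + 1. Then for every x ∈ μ_{q+1}: if x^{(q+1)/4} = ±1 then x^u = x^{2+qu} = x^{2-u}, while if x^{(q+1)/4} = ±ω then x^u = -x^{2+qu} = -x^{2-u}. -/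
theorem stmt10 (p pn q : ℕ) (hp : p.Prime) (hpn : 0 < pn) (hq : q = p ^ pn)
    (hq8 : q % 8 = 3)
    (F : Type*) [Field F] [Fintype F] (hF : Fintype.card F = q ^ 2)
    (ω : F) (hω : ω ^ 2 = -1) (hord : orderOf ω = 4) :
    ∀ x : F, x ^ (q + 1) = 1 →
      ((x ^ ((q + 1) / 4) = 1 ∨ x ^ ((q + 1) / 4) = -1) →
        x ^ ((q + 5) / 4) = x ^ (2 + q * ((q + 5) / 4)) ∧
          x ^ (2 + q * ((q + 5) / 4)) = x ^ ((2 : ℤ) - ((q + 5) / 4 : ℕ))) ∧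
      ((x ^ ((q + 1) / 4) = ω ∨ x ^ ((q + 1) / 4) = -ω) →
        x ^ ((q + 5) / 4) = -x ^ (2 + q * ((q + 5) / 4)) ∧
          -x ^ (2 + q * ((q + 5) / 4)) = -x ^ ((2 : ℤ) - ((q + 5) / 4 : ℕ))) := by
  intro x hx
  have hx0 : x ≠ 0 := by
    intro h
    rw [h, zero_pow (by omega : q + 1 ≠ 0)] at hx
    exact zero_ne_one hx
  set n := (q + 1) / 4 with hn
  have h4 : (q + 5) / 4 = n + 1 := by omega
  have hz : ∀ a b : ℤ, a = b + (q + 1) * (n + 1) → x ^ a = x ^ b := by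
    intro a b hab
    have h1 : x ^ (((q + 1) * (n + 1) : ℕ) : ℤ) = 1 := by
      rw [zpow_natCast, pow_mul, hx, one_pow]
    rw [hab, zpow_add₀ hx0,
      show ((q : ℤ) + 1) * ((n : ℤ) + 1) = (((q + 1) * (n + 1) : ℕ) : ℤ) by push_cast; ring,
      h1, mul_one]
  have key : x ^ (2 + q * ((q + 5) / 4)) = x ^ ((2 : ℤ) - ((q + 5) / 4 : ℕ)) := by
    rw [← zpow_natCast x (2 + q * ((q + 5) / 4))]
    apply hz
    rw [h4]; push_cast; ring
  have key2 : x ^ ((q + 5) / 4) = x ^ ((2 : ℤ) - ((q + 5) / 4 : ℕ)) * (x ^ n) ^ 2 := by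
    rw [← zpow_natCast x ((q + 5) / 4), ← zpow_natCast (x ^ n) 2, ← zpow_natCast x n,
      ← zpow_mul, ← zpow_add₀ hx0]
    congr 1
    rw [h4]; push_cast; ring
  constructor
  · intro h1
    have hsq : (x ^ n) ^ 2 = 1 := by
      rcases h1 with h | h <;> rw [h] <;> simp
    refine ⟨?_, key⟩
    rw [key, key2, hsq, mul_one]
  · intro h1
    have hsq : (x ^ n) ^ 2 = -1 := by
      rcases h1 with h | h <;> rw [h] <;> simp [hω]
    refine ⟨?_, by rw [key]⟩
    rw [key, key2, hsq]
    ring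
end

section
/- Let q ≡ 3 (mod 8) be a prime power and c ∈ F_{q^2} with (c/2)^{(q+1)/4} = 1. Let u = (q+5)/4, let k be an even integer, and set h(x) = c + x^{u+k} + x^{qu+k+2}. Then f(x) = x^r h(x^{q-1}) is a permutation polynomial of F_{q^2} if and only if gcd(r, (q^2-1)/4) = 1 and gcd(r-k-1, (q+1)/4) = 1. -/
/-!
Write `q + 1 = 4m` and `c = 2w` with `w ^ m = 1`. For `x ≠ 0` we have `f(x)^(q-1) = g(x^(q-1))` with
`g(y) = y^r h(y)^(q-1)`, and `x ↦ x^(q-1)` maps `Fˣ` onto `μ_{q+1}` with fibres the cosets of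
`μ_{q-1}`; hence `f` permutes `F` iff `gcd(r, q-1) = 1` and `g` is injective on `μ_{q+1}`.

On `μ_{q+1}` one has `h(y) = c + y^(k+1) (y^m + y^(-m))`. Where `y^(2m) = 1` this is
`2(w + y^m y^(k+1))`, and the Frobenius `y ↦ y^q = y⁻¹` gives `g(y) = y^(r-k-1+m) / w`; where
`y^(2m) = -1` it is `c`, and `g(y) = y^r / w²`. For odd `r`, `g` preserves `y^(2m)`, so it is
injective iff `y ↦ y^(r-k-1+m)` is injective on `μ_{2m}` and `y ↦ y^r` on the coset `y^(2m) = -1`,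
that is iff `gcd(r-k-1, m) = gcd(r, m) = 1`.
-/

open Set

section RootsOfUnity

variable {F : Type*} [Field F] [Fintype F]

theorem FiniteField.exists_isPrimitiveRoot_card_sub_one :
    ∃ ζ : F, IsPrimitiveRoot ζ (Fintype.card F - 1) := by
  classical
  obtain ⟨g, hg⟩ := IsCyclic.exists_ofOrder_eq_natCard (α := Fˣ)
  refine ⟨g, ?_⟩
  rw [IsPrimitiveRoot.coe_units_iff, ← Fintype.card_units, ← Nat.card_eq_fintype_card, ← hg]
  exact IsPrimitiveRoot.orderOf g

theorem FiniteField.exists_pow_eq_of_pow_eq_one {d e : ℕ} (hde : d * e = Fintype.card F - 1)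
    {y : F} (hy : y ^ e = 1) : ∃ x : F, x ^ d = y := by
  obtain ⟨ζ, hζ⟩ := exists_isPrimitiveRoot_card_sub_one (F := F)
  have hcard : 0 < Fintype.card F - 1 := Nat.sub_pos_of_lt Fintype.one_lt_card
  have : NeZero e := ⟨by rintro rfl; omega⟩
  obtain ⟨i, -, hi⟩ := (hζ.pow hcard hde.symm).eq_pow_of_pow_eq_one hy
  exact ⟨ζ ^ i, by rw [← pow_mul, mul_comm, pow_mul, hi]⟩

theorem FiniteField.exists_ne_one_pow_eq_one {n : ℕ} (hn : n ∣ Fintype.card F - 1)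
    (hn1 : n ≠ 1) : ∃ ζ : F, ζ ≠ 1 ∧ ζ ^ n = 1 := by
  obtain ⟨ζ, hζ⟩ := exists_isPrimitiveRoot_card_sub_one (F := F)
  have hcard : 0 < Fintype.card F - 1 := Nat.sub_pos_of_lt Fintype.one_lt_card
  obtain ⟨a, ha⟩ := hn
  have hζa := hζ.pow hcard (ha.trans (mul_comm n a))
  have : n ≠ 0 := by rintro rfl; omega
  exact ⟨_, hζa.ne_one (by omega), hζa.pow_eq_one⟩

end RootsOfUnity

theorem eq_of_zpow_eq_zpow_of_isCoprime {G₀ : Type*} [GroupWithZero G₀] {x y : G₀}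
    (hx : x ≠ 0) (hy : y ≠ 0) {a b : ℤ} (hab : IsCoprime a b) (ha : x ^ a = y ^ a)
    (hb : x ^ b = y ^ b) : x = y := by
  obtain ⟨u, v, huv⟩ := hab
  have expand : ∀ z : G₀, z ≠ 0 → z = (z ^ a) ^ u * (z ^ b) ^ v := fun z hz => by
    rw [← zpow_mul, ← zpow_mul, ← zpow_add₀ hz, mul_comm a, mul_comm b, huv, zpow_one]
  rw [expand x hx, expand y hy, ha, hb]

section Criterion

variable {F : Type*} [Field F] [Fintype F] {d e r : ℕ} {h : F → F}

theorem FiniteField.pow_pow_eq_one_of_mul_eq (hde : d * e = Fintype.card F - 1) {x : F}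
    (hx : x ≠ 0) : (x ^ d) ^ e = 1 := by
  rw [← pow_mul, hde]
  exact FiniteField.pow_card_sub_one_eq_one x hx

theorem FiniteField.coprime_of_injective_pow_mul_comp_pow (hd : d ∣ Fintype.card F - 1)
    (hf : Function.Injective fun x : F => x ^ r * h (x ^ d)) : r.Coprime d := by
  by_contra hcop
  obtain ⟨ζ, hζ1, hζ⟩ := exists_ne_one_pow_eq_one ((Nat.gcd_dvd_right r d).trans hd) hcop
  rw [pow_gcd_eq_one] at hζ
  exact hζ1 (hf (by simp [hζ.1, hζ.2]))

theorem FiniteField.injOn_of_bijective_pow_mul_comp_pow (hde : d * e = Fintype.card F - 1)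
    (hd : 1 < d) (hh : ∀ y : F, y ^ e = 1 → h y ≠ 0)
    (hf : Function.Bijective fun x : F => x ^ r * h (x ^ d)) :
    InjOn (fun y : F => y ^ r * h y ^ d) {y | y ^ e = 1} := by
  have hr : r ≠ 0 := by
    rintro rfl
    have := coprime_of_injective_pow_mul_comp_pow (hde ▸ dvd_mul_right d e) hf.injective
    rw [Nat.coprime_zero_left] at this
    omega
  have he : e ≠ 0 := by
    rintro rfl
    have := Fintype.one_lt_card (α := F)
    omega
  have hmaps : MapsTo (fun y : F => y ^ r * h y ^ d) {y | y ^ e = 1} {y | y ^ e = 1} :=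
    fun y (hy : y ^ e = 1) => by
      change (y ^ r * h y ^ d) ^ e = 1
      rw [mul_pow, ← pow_mul, ← pow_mul, mul_comm r, pow_mul, hy, one_pow, one_mul, hde]
      exact pow_card_sub_one_eq_one _ (hh y hy)
  refine ((toFinite _).injOn_iff_bijOn_of_mapsTo hmaps).mpr
    (((toFinite _).surjOn_iff_bijOn_of_mapsTo hmaps).mp fun z (hz : z ^ e = 1) => ?_)
  obtain ⟨w, rfl⟩ := exists_pow_eq_of_pow_eq_one hde hz
  obtain ⟨x, rfl⟩ := hf.surjective w
  have hx : x ≠ 0 := by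
    rintro rfl
    simp only at hz
    rw [zero_pow hr, zero_mul, zero_pow (by omega), zero_pow he] at hz
    exact zero_ne_one hz
  exact ⟨x ^ d, pow_pow_eq_one_of_mul_eq hde hx, by simp only; ring⟩

theorem FiniteField.injective_pow_mul_comp_pow (hde : d * e = Fintype.card F - 1)
    (hd : 1 < d) (hh : ∀ y : F, y ^ e = 1 → h y ≠ 0) (hcop : r.Coprime d)
    (hinj : InjOn (fun y : F => y ^ r * h y ^ d) {y | y ^ e = 1}) :
    Function.Injective fun x : F => x ^ r * h (x ^ d) := by
  have hr : r ≠ 0 := by rintro rfl; rw [Nat.coprime_zero_left] at hcop; omega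
  have hne : ∀ x : F, x ≠ 0 → x ^ r * h (x ^ d) ≠ 0 := fun x hx =>
    mul_ne_zero (pow_ne_zero _ hx) (hh _ (pow_pow_eq_one_of_mul_eq hde hx))
  intro x₁ x₂ (hfx : x₁ ^ r * h (x₁ ^ d) = x₂ ^ r * h (x₂ ^ d))
  by_cases hx₁ : x₁ = 0
  · by_contra hx₂
    exact hne x₂ (Ne.symm (hx₁ ▸ hx₂)) (by simp [← hfx, hx₁, hr])
  by_cases hx₂ : x₂ = 0
  · exact absurd (by simp [hfx, hx₂, hr]) (hne x₁ hx₁)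
  have hd_eq : x₁ ^ d = x₂ ^ d :=
    hinj (pow_pow_eq_one_of_mul_eq hde hx₁) (pow_pow_eq_one_of_mul_eq hde hx₂)
      (by
        change (x₁ ^ d) ^ r * h (x₁ ^ d) ^ d = (x₂ ^ d) ^ r * h (x₂ ^ d) ^ d
        rw [pow_right_comm, ← mul_pow, hfx, mul_pow, pow_right_comm])
  have hr_eq : x₁ ^ r = x₂ ^ r := by
    rw [hd_eq] at hfx
    exact mul_right_cancel₀ (hh _ (pow_pow_eq_one_of_mul_eq hde hx₂)) hfx
  exact eq_of_zpow_eq_zpow_of_isCoprime hx₁ hx₂ (Nat.isCoprime_iff_coprime.mpr hcop)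
    (by exact_mod_cast hr_eq) (by exact_mod_cast hd_eq)

theorem FiniteField.bijective_pow_mul_comp_pow_iff (hde : d * e = Fintype.card F - 1)
    (hd : 1 < d) (hh : ∀ y : F, y ^ e = 1 → h y ≠ 0) :
    Function.Bijective (fun x : F => x ^ r * h (x ^ d)) ↔
      r.Coprime d ∧ InjOn (fun y : F => y ^ r * h y ^ d) {y | y ^ e = 1} :=
  ⟨fun hf => ⟨coprime_of_injective_pow_mul_comp_pow (hde ▸ dvd_mul_right d e) hf.injective,
      injOn_of_bijective_pow_mul_comp_pow hde hd hh hf⟩,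
    fun ⟨hcop, hinj⟩ => Finite.injective_iff_bijective.mp
      (injective_pow_mul_comp_pow hde hd hh hcop hinj)⟩

end Criterion

theorem Nat.dvd_sq_sub_one_of_add_one_eq_mul {q m a : ℕ} (hqm : q + 1 = a * m) :
    m ∣ q ^ 2 - 1 :=
  ⟨(q - 1) * a, by rw [show q ^ 2 - 1 = (q + 1) * (q - 1) from Nat.sq_sub_sq q 1, hqm]; ring⟩

section Trinomial

variable {F : Type*} [Field F] {p n q m k r : ℕ} {c w y : F}

def trinomialH (c : F) (q k : ℕ) (y : F) : F :=
  c + y ^ ((q + 5) / 4 + k) + y ^ (q * ((q + 5) / 4) + k + 2)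

def trinomialG (c : F) (q k r : ℕ) (y : F) : F :=
  y ^ r * trinomialH c q k y ^ (q - 1)

theorem pow_add_one_eq_one_iff (hqm : q + 1 = 4 * m) :
    y ^ (q + 1) = 1 ↔ y ^ (2 * m) = 1 ∨ y ^ (2 * m) = -1 := by
  rw [← mul_self_eq_one_iff, ← pow_add, ← two_mul, ← mul_assoc, hqm]
  rfl

theorem trinomialH_eq (hqm : q + 1 = 4 * m) (hy : y ^ (q + 1) = 1) :
    trinomialH c q k y = c + y ^ (k + 1) * y ^ m * (1 + y ^ (2 * m)) := by
  have hu : (q + 5) / 4 = m + 1 := by omega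
  have hexp : q * (m + 1) + k + 2 = (k + 1) + m + 2 * m + (q + 1) * m := by nlinarith
  rw [trinomialH, hu, hexp, pow_add _ _ ((q + 1) * m), pow_mul, hy, one_pow, mul_one]
  ring

theorem trinomialH_of_pow_two_mul_eq_one (hqm : q + 1 = 4 * m) (hy : y ^ (2 * m) = 1) :
    trinomialH c q k y = c + 2 * y ^ m * y ^ (k + 1) := by
  rw [trinomialH_eq hqm ((pow_add_one_eq_one_iff hqm).mpr (.inl hy)), hy]
  ring

theorem trinomialH_of_pow_two_mul_eq_neg_one (hqm : q + 1 = 4 * m) (hy : y ^ (2 * m) = -1) :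
    trinomialH c q k y = c := by
  rw [trinomialH_eq hqm ((pow_add_one_eq_one_iff hqm).mpr (.inr hy)), hy]
  ring

theorem trinomialH_ne_zero (hqm : q + 1 = 4 * m) (hm : Odd m) (hk : Even k)
    (h2 : (2 : F) ≠ 0) (hw : w ^ m = 1) (hy : y ^ (q + 1) = 1) :
    trinomialH (2 * w) q k y ≠ 0 := by
  rcases (pow_add_one_eq_one_iff hqm).mp hy with hy2 | hy2
  · rw [trinomialH_of_pow_two_mul_eq_one hqm hy2]
    intro h0
    have hzy : y ^ m * y ^ (k + 1) = -w := by
      apply mul_left_cancel₀ h2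
      linear_combination h0
    obtain ⟨j, hj⟩ := hm.add_odd hk.add_one
    have key : (-1 : F) = 1 := calc
      (-1 : F) = (-w) ^ m := by rw [hm.neg_pow, hw]
      _ = (y ^ (m + (k + 1))) ^ m := by rw [← hzy, ← pow_add]
      _ = (y ^ (2 * m)) ^ j := by rw [hj, ← pow_mul, ← pow_mul]; ring_nf
      _ = 1 := by rw [hy2, one_pow]
    exact h2 (by linear_combination -key)
  · rw [trinomialH_of_pow_two_mul_eq_neg_one hqm hy2]
    refine mul_ne_zero h2 ?_
    rintro rfl
    rw [zero_pow hm.pos.ne'] at hw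
    exact zero_ne_one hw

theorem trinomialH_pow_mul_of_pow_two_mul_eq_one [ExpChar F p] (hq : q = p ^ n)
    (hqm : q + 1 = 4 * m) (hw : w ^ m = 1) (hy : y ^ (2 * m) = 1) :
    trinomialH (2 * w) q k y ^ q * (w * y ^ (k + 1)) = y ^ m * trinomialH (2 * w) q k y := by
  have hy' : y ^ (q + 1) = 1 := (pow_add_one_eq_one_iff hqm).mpr (.inl hy)
  have hφ : ∀ x : F, iterateFrobenius F p n x = x ^ q := fun x => by
    rw [iterateFrobenius_def, hq]
  have hwq : w ^ q * w = 1 := by rw [← pow_succ, hqm, mul_comm, pow_mul, hw, one_pow]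
  have hyq : (y ^ (k + 1)) ^ q * y ^ (k + 1) = 1 := by
    rw [← pow_succ, pow_right_comm, hy', one_pow]
  have hzz : y ^ m * y ^ m = 1 := by rw [← pow_add, ← two_mul, hy]
  have hzq : (y ^ m) ^ q = y ^ m := by
    have : (y ^ m) ^ q * y ^ m = 1 := by rw [← pow_succ, pow_right_comm, hy', one_pow]
    linear_combination y ^ m * this - (y ^ m) ^ q * hzz
  have hH := trinomialH_of_pow_two_mul_eq_one (c := 2 * w) (k := k) hqm hy
  have hHq : trinomialH (2 * w) q k y ^ q = 2 * w ^ q + 2 * (y ^ m) ^ q * (y ^ (k + 1)) ^ q := by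
    simp only [hH, ← hφ, map_add, map_mul, map_ofNat]
  rw [hHq, hzq, hH]
  linear_combination (2 * y ^ (k + 1)) * hwq + (2 * y ^ m * w) * hyq - 2 * y ^ (k + 1) * hzz

theorem trinomialG_of_pow_two_mul_eq_one [ExpChar F p] (hq : q = p ^ n)
    (hqm : q + 1 = 4 * m) (hw : w ^ m = 1) (hy : y ^ (2 * m) = 1)
    (hH : trinomialH (2 * w) q k y ≠ 0) :
    trinomialG (2 * w) q k r y = y ^ ((r : ℤ) - k - 1 + m) / w := by
  have hy0 : y ≠ 0 := by rintro rfl; rw [zero_pow (by omega)] at hy; exact zero_ne_one hy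
  have hw0 : w ≠ 0 := by rintro rfl; rw [zero_pow (by omega)] at hw; exact zero_ne_one hw
  have hHq : trinomialH (2 * w) q k y ^ (q - 1) = y ^ m / (w * y ^ (k + 1)) := by
    rw [eq_div_iff (mul_ne_zero hw0 (pow_ne_zero _ hy0))]
    apply mul_right_cancel₀ hH
    rw [mul_right_comm, pow_sub_one_mul (by omega),
      trinomialH_pow_mul_of_pow_two_mul_eq_one hq hqm hw hy]
  have hzpow : y ^ ((r : ℤ) - k - 1 + m) = y ^ r * y ^ m / y ^ (k + 1) := by
    rw [show (r : ℤ) - k - 1 + m = ((r + m : ℕ) : ℤ) - ((k + 1 : ℕ) : ℤ) by push_cast; ring,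
      zpow_sub₀ hy0, zpow_natCast, zpow_natCast, pow_add]
  rw [trinomialG, hHq, hzpow]
  field_simp

theorem trinomialG_of_pow_two_mul_eq_neg_one [ExpChar F p] (hq : q = p ^ n)
    (hqm : q + 1 = 4 * m) (h2 : (2 : F) ≠ 0) (hw : w ^ m = 1) (hy : y ^ (2 * m) = -1) :
    trinomialG (2 * w) q k r y = y ^ r / w ^ 2 := by
  have hw0 : w ≠ 0 := by rintro rfl; rw [zero_pow (by omega)] at hw; exact zero_ne_one hw
  have hφ : ∀ x : F, iterateFrobenius F p n x = x ^ q := fun x => by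
    rw [iterateFrobenius_def, hq]
  have hcq : (2 * w) ^ q = 2 * w ^ q := by simp only [← hφ, map_mul, map_ofNat]
  have hwq : w ^ q * w = 1 := by rw [← pow_succ, hqm, mul_comm, pow_mul, hw, one_pow]
  have hcq' : (2 * w) ^ (q - 1) = 1 / w ^ 2 := by
    rw [eq_div_iff (pow_ne_zero _ hw0)]
    apply mul_right_cancel₀ (mul_ne_zero h2 hw0)
    rw [mul_right_comm, pow_sub_one_mul (by omega) (2 * w), hcq]
    linear_combination 2 * w * hwq
  rw [trinomialG, trinomialH_of_pow_two_mul_eq_neg_one hqm hy, hcq']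
  ring

theorem trinomialG_pow_two_mul [ExpChar F p] (hq : q = p ^ n) (hqm : q + 1 = 4 * m)
    (hm : Odd m) (hk : Even k) (h2 : (2 : F) ≠ 0) (hw : w ^ m = 1) (hr : Odd r)
    (hy : y ^ (q + 1) = 1) : trinomialG (2 * w) q k r y ^ (2 * m) = y ^ (2 * m) := by
  rcases (pow_add_one_eq_one_iff hqm).mp hy with hy2 | hy2
  · have hza : (y ^ ((r : ℤ) - k - 1 + m)) ^ (2 * m) = 1 := by
      rw [← zpow_natCast, ← zpow_mul, mul_comm, zpow_mul, zpow_natCast, hy2, one_zpow]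
    rw [trinomialG_of_pow_two_mul_eq_one hq hqm hw hy2 (trinomialH_ne_zero hqm hm hk h2 hw hy),
      div_pow, hza, hy2, mul_comm, pow_mul, hw, one_pow, div_one]
  · rw [trinomialG_of_pow_two_mul_eq_neg_one hq hqm h2 hw hy2, div_pow, ← pow_mul, mul_comm r,
      pow_mul, hy2, hr.neg_one_pow, ← pow_mul, show 2 * (2 * m) = m * 4 by ring, pow_mul, hw,
      one_pow, div_one]

theorem injOn_trinomialG [ExpChar F p] (hq : q = p ^ n) (hqm : q + 1 = 4 * m) (hm : Odd m)
    (hk : Even k) (h2 : (2 : F) ≠ 0) (hw : w ^ m = 1) (hr : Odd r) (hrm : r.Coprime m)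
    (hrkm : Int.gcd ((r : ℤ) - k - 1) m = 1) :
    InjOn (trinomialG (2 * w) q k r) {y | y ^ (q + 1) = 1} := by
  have hw0 : w ≠ 0 := by rintro rfl; rw [zero_pow hm.pos.ne'] at hw; exact zero_ne_one hw
  have hne : ∀ y : F, y ^ (q + 1) = 1 → y ≠ 0 := by
    rintro y hy rfl; rw [zero_pow (by omega)] at hy; exact zero_ne_one hy
  intro y₁ hy₁ y₂ hy₂ heq
  have hsign : y₁ ^ (2 * m) = y₂ ^ (2 * m) := by
    rw [← trinomialG_pow_two_mul hq hqm hm hk h2 hw hr hy₁,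
      ← trinomialG_pow_two_mul hq hqm hm hk h2 hw hr hy₂, heq]
  have hsign' : y₁ ^ ((2 * m : ℕ) : ℤ) = y₂ ^ ((2 * m : ℕ) : ℤ) := by
    rw [zpow_natCast, zpow_natCast, hsign]
  rcases (pow_add_one_eq_one_iff hqm).mp hy₁ with hP | hN
  · rw [trinomialG_of_pow_two_mul_eq_one hq hqm hw hP (trinomialH_ne_zero hqm hm hk h2 hw hy₁),
      trinomialG_of_pow_two_mul_eq_one hq hqm hw (hsign ▸ hP)
        (trinomialH_ne_zero hqm hm hk h2 hw hy₂), div_left_inj' hw0] at heq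
    refine eq_of_zpow_eq_zpow_of_isCoprime (hne y₁ hy₁) (hne y₂ hy₂) ?_ heq hsign'
    have hodd : Odd ((r : ℤ) - k - 1 + m) := by
      have := Nat.odd_iff.mp hr; have := Nat.even_iff.mp hk; have := Nat.odd_iff.mp hm
      exact Int.odd_iff.mpr (by omega)
    push_cast
    exact (Int.isCoprime_two_right.mpr hodd).mul_right
      (by simpa using (Int.isCoprime_iff_gcd_eq_one.mpr hrkm).add_mul_left_left 1)
  · rw [trinomialG_of_pow_two_mul_eq_neg_one hq hqm h2 hw hN,
      trinomialG_of_pow_two_mul_eq_neg_one hq hqm h2 hw (hsign ▸ hN),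
      div_left_inj' (pow_ne_zero 2 hw0)] at heq
    refine eq_of_zpow_eq_zpow_of_isCoprime (hne y₁ hy₁) (hne y₂ hy₂) ?_
      (by rw [zpow_natCast, zpow_natCast, heq]) hsign'
    exact Nat.isCoprime_iff_coprime.mpr ((Nat.coprime_two_right.mpr hr).mul_right hrm)

theorem coprime_of_injOn_trinomialG [Fintype F] [ExpChar F p] (hq : q = p ^ n)
    (hcard : Fintype.card F = q ^ 2) (hqm : q + 1 = 4 * m) (hm : Odd m) (h2 : (2 : F) ≠ 0)
    (hw : w ^ m = 1) (hinj : InjOn (trinomialG (2 * w) q k r) {y | y ^ (q + 1) = 1}) :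
    r.Coprime m := by
  by_contra hrm
  obtain ⟨ζ, hζ1, hζ⟩ := FiniteField.exists_ne_one_pow_eq_one
    ((Nat.gcd_dvd_right r m).trans (hcard ▸ Nat.dvd_sq_sub_one_of_add_one_eq_mul hqm)) hrm
  rw [pow_gcd_eq_one] at hζ
  -- `i` and `i * ζ`, with `i ^ 2 = -1`, are distinct points of the half `y ^ (2m) = -1`,
  -- where `g(y) = y ^ r / w ^ 2` does not separate them.
  obtain ⟨i, hi⟩ := FiniteField.isSquare_neg_one_iff.mpr (by
    rw [hcard, Nat.pow_mod, show q % 4 = 3 by omega]; norm_num : Fintype.card F % 4 ≠ 3)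
  have hi2m : i ^ (2 * m) = -1 := by rw [pow_mul, sq, ← hi, hm.neg_one_pow]
  have hiζ2m : (i * ζ) ^ (2 * m) = -1 := by rw [mul_pow, hi2m, pow_mul', hζ.2, one_pow, mul_one]
  have hi0 : i ≠ 0 := by rintro rfl; rw [zero_pow (by omega)] at hi2m; simp at hi2m
  have := hinj ((pow_add_one_eq_one_iff hqm).mpr (.inr hi2m))
    ((pow_add_one_eq_one_iff hqm).mpr (.inr hiζ2m))
    (by rw [trinomialG_of_pow_two_mul_eq_neg_one hq hqm h2 hw hi2m,
      trinomialG_of_pow_two_mul_eq_neg_one hq hqm h2 hw hiζ2m, mul_pow, hζ.1, mul_one])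
  exact hζ1 (mul_left_cancel₀ hi0 (by rw [mul_one, ← this]))

theorem gcd_eq_one_of_injOn_trinomialG [Fintype F] [ExpChar F p] (hq : q = p ^ n)
    (hcard : Fintype.card F = q ^ 2) (hqm : q + 1 = 4 * m) (hm : Odd m) (hk : Even k)
    (h2 : (2 : F) ≠ 0) (hw : w ^ m = 1)
    (hinj : InjOn (trinomialG (2 * w) q k r) {y | y ^ (q + 1) = 1}) :
    Int.gcd ((r : ℤ) - k - 1) m = 1 := by
  by_contra hne
  have hgm : Int.gcd ((r : ℤ) - k - 1) m ∣ m := Int.natCast_dvd_natCast.mp (Int.gcd_dvd_right _ _)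
  obtain ⟨ζ, hζ1, hζ⟩ := FiniteField.exists_ne_one_pow_eq_one
    (hgm.trans (hcard ▸ Nat.dvd_sq_sub_one_of_add_one_eq_mul hqm)) hne
  have hζm : ζ ^ m = 1 := by obtain ⟨t, ht⟩ := hgm; rw [ht, pow_mul, hζ, one_pow]
  have hζ0 : ζ ≠ 0 := by rintro rfl; rw [zero_pow hm.pos.ne'] at hζm; exact zero_ne_one hζm
  have hζa : ζ ^ ((r : ℤ) - k - 1) = 1 := by
    obtain ⟨t, ht⟩ := Int.gcd_dvd_left ((r : ℤ) - k - 1) m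
    rw [ht, zpow_mul, zpow_natCast, hζ, one_zpow]
  -- `g(y) = y ^ (r - k - 1 + m) / w` takes the same value at `1` and at `ζ`.
  have h1 : (1 : F) ^ (2 * m) = 1 := one_pow _
  have hζ2m : ζ ^ (2 * m) = 1 := by rw [pow_mul', hζm, one_pow]
  have hG {y : F} (hy : y ^ (2 * m) = 1) := trinomialG_of_pow_two_mul_eq_one (r := r) hq hqm hw hy
    (trinomialH_ne_zero hqm hm hk h2 hw ((pow_add_one_eq_one_iff hqm).mpr (.inl hy)))
  refine hζ1 (hinj ((pow_add_one_eq_one_iff hqm).mpr (.inl h1))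
    ((pow_add_one_eq_one_iff hqm).mpr (.inl hζ2m)) ?_).symm
  rw [hG h1, hG hζ2m, one_zpow, zpow_add₀ hζ0, hζa, zpow_natCast, hζm, one_mul]

theorem injOn_trinomialG_iff [Fintype F] [ExpChar F p] (hq : q = p ^ n)
    (hcard : Fintype.card F = q ^ 2) (hqm : q + 1 = 4 * m) (hm : Odd m) (hk : Even k)
    (h2 : (2 : F) ≠ 0) (hw : w ^ m = 1) (hr : Odd r) :
    InjOn (trinomialG (2 * w) q k r) {y | y ^ (q + 1) = 1} ↔
      r.Coprime m ∧ Int.gcd ((r : ℤ) - k - 1) m = 1 :=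
  ⟨fun hinj => ⟨coprime_of_injOn_trinomialG hq hcard hqm hm h2 hw hinj,
      gcd_eq_one_of_injOn_trinomialG hq hcard hqm hm hk h2 hw hinj⟩,
    fun ⟨hrm, hrkm⟩ => injOn_trinomialG hq hqm hm hk h2 hw hr hrm hrkm⟩

end Trinomial

theorem stmt11_general (p pn q : ℕ) (hp : p.Prime) (hq : q = p ^ pn)
    (hq8 : q % 8 = 3)
    (F : Type*) [Field F] [Fintype F] (hF : Fintype.card F = q ^ 2)
    (c : F) (hc : (c / 2) ^ ((q + 1) / 4) = 1)
    (k : ℕ) (hk : Even k) (r : ℕ) :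
    Function.Bijective (fun x : F => x ^ r *
      (c + (x ^ (q - 1)) ^ ((q + 5) / 4 + k)
         + (x ^ (q - 1)) ^ (q * ((q + 5) / 4) + k + 2))) ↔
      (Nat.gcd r ((q ^ 2 - 1) / 4) = 1 ∧
        Int.gcd ((r : ℤ) - k - 1) (((q + 1) / 4 : ℕ) : ℤ) = 1) := by
  obtain ⟨m, hqm, hm⟩ : ∃ m, q + 1 = 4 * m ∧ Odd m :=
    ⟨(q + 1) / 4, by omega, Nat.odd_iff.mpr (by omega)⟩
  have hm4 : (q + 1) / 4 = m := by omega
  have : Fact p.Prime := ⟨hp⟩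
  have : CharP F p := charP_of_card_eq_prime_pow (hF.trans (by rw [hq, ← pow_mul]))
  have h2 : (2 : F) ≠ 0 := fun h => by simp [h, hm4, zero_pow hm.pos.ne'] at hc
  obtain ⟨w, rfl⟩ : ∃ w, c = 2 * w := ⟨c / 2, by field_simp⟩
  rw [hm4, mul_div_cancel_left₀ w h2] at hc
  have hcard : (q - 1) * (q + 1) = q ^ 2 - 1 := by
    rw [show q ^ 2 - 1 = (q + 1) * (q - 1) from Nat.sq_sub_sq q 1, mul_comm]
  rw [hm4, ← hcard, hqm, mul_left_comm, Nat.mul_div_cancel_left _ (by norm_num),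
    ← Nat.coprime_iff_gcd_eq_one, Nat.coprime_mul_iff_right, and_assoc]
  refine (FiniteField.bijective_pow_mul_comp_pow_iff (h := trinomialH (2 * w) q k) (hF ▸ hcard)
    (by omega) fun y hy => trinomialH_ne_zero hqm hm hk h2 hc hy).trans
    (and_congr_right fun hrq => injOn_trinomialG_iff hq hF hqm hm hk h2 hc ?_)
  exact Nat.coprime_two_right.mp (hrq.coprime_dvd_right ⟨2 * m - 1, by omega⟩)

theorem stmt11 (p pn q : ℕ) (hp : p.Prime) (hpn : 0 < pn) (hq : q = p ^ pn)
    (hq8 : q % 8 = 3)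
    (F : Type*) [Field F] [Fintype F] (hF : Fintype.card F = q ^ 2)
    (c : F) (hc : (c / 2) ^ ((q + 1) / 4) = 1)
    (k : ℕ) (hk : Even k) (r : ℕ) :
    Function.Bijective (fun x : F => x ^ r *
      (c + (x ^ (q - 1)) ^ ((q + 5) / 4 + k)
         + (x ^ (q - 1)) ^ (q * ((q + 5) / 4) + k + 2))) ↔
      (Nat.gcd r ((q ^ 2 - 1) / 4) = 1 ∧
        Int.gcd ((r : ℤ) - k - 1) (((q + 1) / 4 : ℕ) : ℤ) = 1) :=
  stmt11_general p pn q hp hq hq8 F hF c hc k hk r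
end

section
/- Let q be an odd prime power and c ∈ F_{q^2} with (c/2)^{(q+1)/2} = 1. Let u and v be odd positive integers and set h(x) = c + x^u(x^{(q+1)v/2} - 1). Then f(x) = x^r h(x^{q-1}) is a permutation polynomial of F_{q^2} if and only if gcd(r, (q^2-1)/2) = 1 and gcd(r-u, (q+1)/2) = 1. -/
/-!
Put `k = (q + 1) / 2` and `m = (q ^ 2 - 1) / 2 = (q - 1) k`, so that `x ^ m = ±1` is the quadratic
character and `x ^ (q - 1)` lies in `μ_(q+1)`, with `(x ^ (q - 1)) ^ k = x ^ m`. On squares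
`f x = c x ^ r`, and `c` is a square; on nonsquares `f x = 2 x ^ r (c / 2 - x ^ ((q - 1) u))`,
a difference of two distinct elements of `μ_(q+1)`, so Frobenius gives
`f x ^ (q - 1) = -x ^ ((q - 1) (r - u)) / (c / 2)`.

Hence `f` permutes the squares iff `gcd (r, m) = 1`. Comparing `(q - 1)`-th powers of two values on
nonsquares reduces injectivity there to that of `ζ ↦ ζ ^ (r - u)` on `μ_k`, i.e. to
`gcd (r - u, k) = 1`; conversely, if `f` is a permutation it maps nonsquares onto nonsquares, so
`ζ ↦ ζ ^ (r - u)` must reach an element of order `k` of `μ_k`.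
-/

section Monoid

variable {M : Type*} [Monoid M]

theorem eq_one_of_pow_eq_pow_of_intGCD_sub_eq_one {ζ : M} {k r u : ℕ} (hk : k ≠ 0)
    (hζ : ζ ^ k = 1) (h : ζ ^ r = ζ ^ u) (hcop : Int.gcd ((r : ℤ) - u) k = 1) : ζ = 1 := by
  obtain ⟨y, rfl⟩ := IsUnit.of_pow_eq_one hζ hk
  have hy : y ^ ((r : ℤ) - u) = 1 := by
    rw [zpow_sub, zpow_natCast, zpow_natCast, mul_inv_eq_one, ← Units.val_inj]
    simpa using h
  have hyk : y ^ (k : ℤ) = 1 := by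
    rw [zpow_natCast, ← Units.val_inj]
    simpa using hζ
  have := pow_intGCD_eq_one.mpr ⟨hy, hyk⟩
  rw [hcop, pow_one] at this
  simp [this]

theorem intGCD_sub_eq_one_of_pow_eq_pow_mul {ζ ρ : M} {k r u : ℕ} (hk : k ≠ 0)
    (hζ : ζ ^ k = 1) (h : ζ ^ r = ζ ^ u * ρ) (hρ : orderOf ρ = k) :
    Int.gcd ((r : ℤ) - u) k = 1 := by
  obtain ⟨y, rfl⟩ := IsUnit.of_pow_eq_one hζ hk
  have hρy : ρ = ↑(y ^ ((r : ℤ) - u)) := by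
    rw [sub_eq_neg_add, zpow_add, zpow_neg, zpow_natCast, zpow_natCast, Units.val_mul,
      Units.val_pow_eq_pow_val, h, ← Units.val_pow_eq_pow_val, Units.inv_mul_cancel_left]
  set d := Int.gcd ((r : ℤ) - u) k
  have hdk : d ∣ k := Int.natCast_dvd_natCast.mp (Int.gcd_dvd_right _ _)
  have hk0 : 0 < k := Nat.pos_of_ne_zero hk
  have hkd : 0 < k / d := Nat.div_pos (Nat.le_of_dvd hk0 hdk) (Nat.pos_of_dvd_of_pos hdk hk0)
  have hρd : ρ ^ (k / d) = 1 := by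
    obtain ⟨e, he⟩ := Int.gcd_dvd_left ((r : ℤ) - u) k
    have hyk : y ^ (k : ℤ) = 1 := by
      rw [zpow_natCast, ← Units.val_inj]
      simpa using hζ
    rw [hρy, ← Units.val_pow_eq_pow_val, ← zpow_natCast, ← zpow_mul, he,
      show (d : ℤ) * e * ((k / d : ℕ) : ℤ) = k * e by
        rw [mul_comm (d : ℤ), mul_assoc, ← Nat.cast_mul, Nat.mul_div_cancel' hdk, mul_comm],
      zpow_mul, hyk, one_zpow, Units.val_one]
  have hkk := Nat.le_of_dvd hkd (hρ ▸ orderOf_dvd_of_pow_eq_one hρd)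
  have hd0 : 0 < d := Nat.pos_of_dvd_of_pos hdk hk0
  rw [Nat.le_div_iff_mul_le hd0] at hkk
  nlinarith

theorem exists_pow_eq_of_coprime {m r : ℕ} {z : M} (hrm : r.Coprime m) (hm : 1 < m)
    (hz : z ^ m = 1) : ∃ y : M, y ^ m = 1 ∧ y ^ r = z := by
  obtain ⟨s, -, hs⟩ := Nat.exists_mul_mod_eq_one_of_coprime hrm hm
  refine ⟨z ^ s, by rw [← pow_mul, mul_comm, pow_mul, hz, one_pow], ?_⟩
  rw [← pow_mul, mul_comm, ← Nat.div_add_mod (r * s) m, hs, pow_add, pow_mul, hz,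
    one_pow, one_mul, pow_one]

end Monoid

theorem exists_ne_one_pow_eq_one_of_gcd_ne_one {G : Type*} [Group G] [Finite G] {m r : ℕ}
    (h : r.gcd m ≠ 1) (hm : m ∣ Nat.card G) : ∃ ζ : G, ζ ≠ 1 ∧ ζ ^ r = 1 ∧ ζ ^ m = 1 := by
  obtain ⟨ℓ, hℓ, hℓd⟩ := Nat.exists_prime_and_dvd h
  have := Fact.mk hℓ
  obtain ⟨ζ, hζ⟩ := exists_prime_orderOf_dvd_card' ℓ ((hℓd.trans (Nat.gcd_dvd_right r m)).trans hm)
  refine ⟨ζ, fun h1 => hℓ.one_lt.ne' (by rw [← hζ, h1, orderOf_one]), ?_, ?_⟩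
  · exact orderOf_dvd_iff_pow_eq_one.mp (hζ ▸ hℓd.trans (Nat.gcd_dvd_left r m))
  · exact orderOf_dvd_iff_pow_eq_one.mp (hζ ▸ hℓd.trans (Nat.gcd_dvd_right r m))

theorem sq_eq_two_mul_pred_mul_add_one {q k : ℕ} (hk : q + 1 = 2 * k) :
    q ^ 2 = 2 * ((q - 1) * k) + 1 := by
  obtain ⟨j, rfl⟩ : ∃ j, k = j + 1 := ⟨k - 1, by omega⟩
  obtain rfl : q = 2 * j + 1 := by omega
  simp only [Nat.add_sub_cancel]
  ring

theorem odd_of_intGCD_sub_eq_one {k r u : ℕ} (hr : Odd r) (hu : Odd u)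
    (h : Int.gcd ((r : ℤ) - u) k = 1) : Odd k := by
  rw [← Nat.not_even_iff_odd]
  rintro ⟨j, hj⟩
  obtain ⟨a, ha⟩ := hr
  obtain ⟨b, hb⟩ := hu
  have h2 := Int.dvd_gcd (show (2 : ℤ) ∣ r - u from ⟨a - b, by omega⟩)
    (show (2 : ℤ) ∣ k from ⟨j, by omega⟩)
  rw [h] at h2
  norm_num at h2

section FiniteField

variable {F : Type*} [Field F] [Fintype F] {q : ℕ}

theorem one_lt_of_card_eq_sq (hF : Fintype.card F = q ^ 2) : 1 < q := by
  have := hF ▸ Fintype.one_lt_card (α := F)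
  by_contra! hq
  interval_cases q <;> simp at this

theorem ringChar_ne_two_of_card_eq_sq (hF : Fintype.card F = q ^ 2) (hq : Odd q) :
    ringChar F ≠ 2 := by
  rw [Ne, FiniteField.even_card_iff_char_two, hF, ← Nat.even_iff, Nat.not_even_iff_odd]
  exact hq.pow

theorem sub_pow_of_card_eq_sq (hF : Fintype.card F = q ^ 2) (x y : F) :
    (x - y) ^ q = x ^ q - y ^ q := by
  obtain ⟨p, _⟩ := CharP.exists F
  obtain ⟨n, hp, hcard⟩ := FiniteField.card F p
  have := Fact.mk hp
  obtain ⟨j, -, rfl⟩ := (Nat.dvd_prime_pow hp).mp (hcard ▸ hF ▸ dvd_pow_self q two_ne_zero)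
  exact sub_pow_char_pow x y j

theorem two_pow_pred_of_card_eq_sq (hF : Fintype.card F = q ^ 2) (hq : Odd q) :
    (2 : F) ^ (q - 1) = 1 := by
  have h2 : (2 : F) ^ q = 2 := by
    rw [show (2 : F) = 1 - (-1) by norm_num, sub_pow_of_card_eq_sq hF, one_pow, hq.neg_one_pow]
  refine mul_right_cancel₀ (Ring.two_ne_zero (ringChar_ne_two_of_card_eq_sq hF hq)) ?_
  rw [← pow_succ, Nat.sub_add_cancel hq.pos, h2, one_mul]

theorem one_lt_pred_mul {k : ℕ} (hF : Fintype.card F = q ^ 2) (hk : q + 1 = 2 * k) :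
    1 < (q - 1) * k := by
  have := one_lt_of_card_eq_sq hF
  nlinarith [Nat.sub_add_cancel this.le]

theorem ne_zero_of_pow_half_eq_neg_one {k : ℕ} {x : F} (hF : Fintype.card F = q ^ 2) (hk : q + 1 = 2 * k)
    (hx : x ^ ((q - 1) * k) = -1) : x ≠ 0 := by
  rintro rfl
  rw [zero_pow (one_lt_pred_mul hF hk).ne_bot] at hx
  exact one_ne_zero (neg_eq_zero.mp hx.symm)

theorem card_units_eq {k : ℕ} (hF : Fintype.card F = q ^ 2) (hk : q + 1 = 2 * k) :
    Nat.card Fˣ = 2 * ((q - 1) * k) := by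
  rw [Nat.card_units, Nat.card_eq_fintype_card, hF, sq_eq_two_mul_pred_mul_add_one hk,
    Nat.add_sub_cancel]

/-- Euler's criterion: `(q - 1) * k = (q ^ 2 - 1) / 2`, the exponent called `pow_half` in names. -/
theorem pow_half_eq_one_or_neg_one {k : ℕ} (hF : Fintype.card F = q ^ 2) (hk : q + 1 = 2 * k)
    {x : F} (hx : x ≠ 0) : x ^ ((q - 1) * k) = 1 ∨ x ^ ((q - 1) * k) = -1 := by
  have := FiniteField.pow_dichotomy (ringChar_ne_two_of_card_eq_sq hF ⟨k - 1, by omega⟩) hx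
  rwa [hF, sq_eq_two_mul_pred_mul_add_one hk, Nat.mul_add_div two_pos, Nat.div_eq_of_lt one_lt_two,
    add_zero] at this

theorem sub_pow_pred_eq_neg_inv_mul (hF : Fintype.card F = q ^ 2) {a b : F}
    (ha : a ^ (q + 1) = 1) (hb : b ^ (q + 1) = 1) (hab : a ≠ b) :
    (a - b) ^ (q - 1) = -(a * b)⁻¹ := by
  have hq := one_lt_of_card_eq_sq hF
  have ha0 : a ≠ 0 := by rintro rfl; simp at ha
  have hb0 : b ≠ 0 := by rintro rfl; simp at hb
  have hsub : a - b ≠ 0 := sub_ne_zero.mpr hab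
  have haq : a ^ q = a⁻¹ := eq_inv_of_mul_eq_one_left (by rwa [← pow_succ])
  have hbq : b ^ q = b⁻¹ := eq_inv_of_mul_eq_one_left (by rwa [← pow_succ])
  refine mul_right_cancel₀ hsub ?_
  rw [← pow_succ, Nat.sub_add_cancel hq.le, sub_pow_of_card_eq_sq hF, haq, hbq]
  field_simp
  ring

theorem exists_pow_half_eq_neg_one_orderOf {k : ℕ} (hF : Fintype.card F = q ^ 2)
    (hk : q + 1 = 2 * k) :
    ∃ g : F, g ^ ((q - 1) * k) = -1 ∧ orderOf (g ^ (2 * (q - 1))) = k := by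
  have hq := one_lt_of_card_eq_sq hF
  have hm := one_lt_pred_mul hF hk
  obtain ⟨g, hg⟩ := IsCyclic.exists_ofOrder_eq_natCard (α := Fˣ)
  have hord : orderOf (g : F) = 2 * (q - 1) * k := by
    rw [orderOf_units, hg, card_units_eq hF hk, mul_assoc]
  refine ⟨g, (pow_half_eq_one_or_neg_one hF hk g.ne_zero).resolve_left ?_, ?_⟩
  · refine pow_ne_one_of_lt_orderOf (by omega) ?_
    rw [hord, mul_assoc]
    omega
  · rw [orderOf_pow_of_dvd (by omega) (hord ▸ dvd_mul_right _ _), hord,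
      Nat.mul_div_cancel_left _ (by omega)]

end FiniteField

namespace XrhPerm

variable {F : Type*} [Field F] {c t x y : F} {q k u v r : ℕ}

def h (c : F) (k u v : ℕ) (t : F) : F := c + t ^ u * (t ^ (k * v) - 1)

/-- With `k = (q + 1) / 2`, `f q k c u v r` is the map `x ↦ x ^ r * h (x ^ (q - 1))` of the
statement. -/
def f (q k : ℕ) (c : F) (u v r : ℕ) (x : F) : F := x ^ r * h c k u v (x ^ (q - 1))

theorem h_of_pow_eq_one (ht : t ^ k = 1) : h c k u v t = c := by
  rw [h, pow_mul, ht, one_pow, sub_self, mul_zero, add_zero]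

theorem h_of_pow_eq_neg_one (h2 : (2 : F) ≠ 0) (hv : Odd v) (ht : t ^ k = -1) :
    h c k u v t = 2 * (c / 2 - t ^ u) := by
  rw [h, pow_mul, ht, hv.neg_one_pow, mul_sub (2 : F), mul_div_cancel₀ c h2]
  ring

theorem ne_zero_of_half_pow_eq_one (hk : k ≠ 0) (hc : (c / 2) ^ k = 1) : c ≠ 0 := by
  rintro rfl
  simp [hk] at hc

theorem f_of_pow_half_eq_one (hx : x ^ ((q - 1) * k) = 1) : f q k c u v r x = c * x ^ r := by
  rw [f, h_of_pow_eq_one (by rwa [← pow_mul]), mul_comm]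

theorem eq_of_f_eq_of_pow_half_eq_one (hc : c ≠ 0) (hr : r.Coprime ((q - 1) * k)) (hy0 : y ≠ 0)
    (hx : x ^ ((q - 1) * k) = 1) (hy : y ^ ((q - 1) * k) = 1)
    (hxy : f q k c u v r x = f q k c u v r y) : x = y := by
  rw [f_of_pow_half_eq_one hx, f_of_pow_half_eq_one hy] at hxy
  rw [← div_eq_one_iff_eq hy0, ← pow_eq_one_iff_of_coprime hr, div_pow, div_pow,
    mul_left_cancel₀ hc hxy, div_self (pow_ne_zero r hy0), hx, hy, div_one]
  exact ⟨rfl, rfl⟩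

variable [Fintype F]

theorem half_ne_pow_of_pow_eq_neg_one (hF : Fintype.card F = q ^ 2) (hk : q + 1 = 2 * k)
    (hc : (c / 2) ^ k = 1) (hu : Odd u) (ht : t ^ k = -1) : c / 2 ≠ t ^ u := by
  intro e
  refine Ring.neg_one_ne_one_of_char_ne_two (ringChar_ne_two_of_card_eq_sq hF ⟨k - 1, by omega⟩) ?_
  rw [← hu.neg_one_pow, ← ht, ← pow_mul, mul_comm, pow_mul, ← e, hc]

theorem h_ne_zero (hF : Fintype.card F = q ^ 2) (hk : q + 1 = 2 * k) (hc : (c / 2) ^ k = 1)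
    (hu : Odd u) (hv : Odd v) (ht : t ^ k = -1) : h c k u v t ≠ 0 := by
  have h2 := Ring.two_ne_zero (ringChar_ne_two_of_card_eq_sq (F := F) hF ⟨k - 1, by omega⟩)
  rw [h_of_pow_eq_neg_one h2 hv ht]
  exact mul_ne_zero h2 (sub_ne_zero.mpr (half_ne_pow_of_pow_eq_neg_one hF hk hc hu ht))

theorem h_pow_pred (hF : Fintype.card F = q ^ 2) (hk : q + 1 = 2 * k) (hc : (c / 2) ^ k = 1)
    (hu : Odd u) (hv : Odd v) (ht : t ^ k = -1) :
    h c k u v t ^ (q - 1) = -(c / 2 * t ^ u)⁻¹ := by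
  have hq : Odd q := ⟨k - 1, by omega⟩
  have h2 := Ring.two_ne_zero (ringChar_ne_two_of_card_eq_sq (F := F) hF hq)
  rw [h_of_pow_eq_neg_one h2 hv ht, mul_pow, two_pow_pred_of_card_eq_sq hF hq, one_mul]
  refine sub_pow_pred_eq_neg_inv_mul hF ?_ ?_ (half_ne_pow_of_pow_eq_neg_one hF hk hc hu ht)
  · rw [hk, mul_comm, pow_mul, hc, one_pow]
  · rw [hk, pow_mul', ← pow_mul t u k, pow_mul' t u k, ht, hu.neg_one_pow, neg_one_sq]

theorem pow_half_eq_one_of_half_pow_eq_one (hF : Fintype.card F = q ^ 2) (hk : q + 1 = 2 * k)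
    (hc : (c / 2) ^ k = 1) : c ^ ((q - 1) * k) = 1 := by
  have hq : Odd q := ⟨k - 1, by omega⟩
  rw [← mul_div_cancel₀ c (Ring.two_ne_zero (ringChar_ne_two_of_card_eq_sq hF hq)), mul_pow,
    pow_mul, two_pow_pred_of_card_eq_sq hF hq, pow_mul', hc, one_pow, one_pow, one_mul]

theorem f_pow_pred_of_pow_half_eq_neg_one (hF : Fintype.card F = q ^ 2) (hk : q + 1 = 2 * k)
    (hc : (c / 2) ^ k = 1) (hu : Odd u) (hv : Odd v) (hx : x ^ ((q - 1) * k) = -1) :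
    f q k c u v r x ^ (q - 1) = -(x ^ (q - 1)) ^ r * (c / 2 * (x ^ (q - 1)) ^ u)⁻¹ := by
  rw [f, mul_pow, pow_right_comm, h_pow_pred hF hk hc hu hv (by rwa [← pow_mul])]
  ring

theorem div_pow_pred_mul_of_pow_half_eq_neg_one (hF : Fintype.card F = q ^ 2)
    (hk : q + 1 = 2 * k) (hc : (c / 2) ^ k = 1) (hu : Odd u) (hv : Odd v)
    (hx : x ^ ((q - 1) * k) = -1) (hy : y ^ ((q - 1) * k) = -1) :
    (f q k c u v r x / f q k c u v r y) ^ (q - 1) * ((x / y) ^ (q - 1)) ^ u =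
      ((x / y) ^ (q - 1)) ^ r := by
  have hc0 : c / 2 ≠ 0 := by rintro e; simp [e, show k ≠ 0 by omega] at hc
  have hτ := pow_ne_zero (q - 1) (ne_zero_of_pow_half_eq_neg_one hF hk hx)
  have hσ := pow_ne_zero (q - 1) (ne_zero_of_pow_half_eq_neg_one hF hk hy)
  rw [div_pow, div_pow x, f_pow_pred_of_pow_half_eq_neg_one hF hk hc hu hv hx,
    f_pow_pred_of_pow_half_eq_neg_one hF hk hc hu hv hy]
  generalize x ^ (q - 1) = τ at hτ ⊢
  generalize y ^ (q - 1) = σ at hσ ⊢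
  generalize c / 2 = a at hc0 ⊢
  rw [div_pow, div_pow]
  field_simp

theorem f_ne_zero (hF : Fintype.card F = q ^ 2) (hk : q + 1 = 2 * k) (hc : (c / 2) ^ k = 1)
    (hu : Odd u) (hv : Odd v) (hx : x ≠ 0) : f q k c u v r x ≠ 0 := by
  rcases pow_half_eq_one_or_neg_one hF hk hx with hxm | hxm
  · rw [f_of_pow_half_eq_one hxm]
    exact mul_ne_zero (ne_zero_of_half_pow_eq_one (by omega) hc) (pow_ne_zero r hx)
  · exact mul_ne_zero (pow_ne_zero r hx) (h_ne_zero hF hk hc hu hv (by rwa [← pow_mul]))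

theorem f_pow_half_of_pow_half_eq_one (hF : Fintype.card F = q ^ 2) (hk : q + 1 = 2 * k)
    (hc : (c / 2) ^ k = 1) (hx : x ^ ((q - 1) * k) = 1) :
    f q k c u v r x ^ ((q - 1) * k) = 1 := by
  rw [f_of_pow_half_eq_one hx, mul_pow, pow_half_eq_one_of_half_pow_eq_one hF hk hc,
    pow_right_comm, hx, one_pow, one_mul]

theorem f_pow_half_of_pow_half_eq_neg_one (hF : Fintype.card F = q ^ 2) (hk : q + 1 = 2 * k)
    (hc : (c / 2) ^ k = 1) (hu : Odd u) (hv : Odd v) (hko : Odd k) (hr : Odd r)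
    (hx : x ^ ((q - 1) * k) = -1) : f q k c u v r x ^ ((q - 1) * k) = -1 := by
  have hxk : (x ^ (q - 1)) ^ k = -1 := by rwa [← pow_mul]
  rw [pow_mul, f_pow_pred_of_pow_half_eq_neg_one hF hk hc hu hv hx, mul_pow, mul_inv, mul_pow,
    neg_pow, pow_right_comm, hxk, inv_pow, inv_pow, hc, pow_right_comm, hxk, hko.neg_one_pow,
    hr.neg_one_pow, hu.neg_one_pow]
  norm_num

theorem f_pow_half_eq (hF : Fintype.card F = q ^ 2) (hk : q + 1 = 2 * k)
    (hc : (c / 2) ^ k = 1) (hu : Odd u) (hv : Odd v) (hko : Odd k) (hr : Odd r) (hx : x ≠ 0) :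
    f q k c u v r x ^ ((q - 1) * k) = x ^ ((q - 1) * k) := by
  rcases pow_half_eq_one_or_neg_one hF hk hx with h | h <;> rw [h]
  · exact f_pow_half_of_pow_half_eq_one hF hk hc h
  · exact f_pow_half_of_pow_half_eq_neg_one hF hk hc hu hv hko hr h

theorem f_eq_zero_iff (hF : Fintype.card F = q ^ 2) (hk : q + 1 = 2 * k) (hc : (c / 2) ^ k = 1)
    (hu : Odd u) (hv : Odd v) (hr : r ≠ 0) : f q k c u v r x = 0 ↔ x = 0 := by
  refine ⟨not_imp_not.mp (f_ne_zero hF hk hc hu hv), ?_⟩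
  rintro rfl
  rw [f, zero_pow hr, zero_mul]

theorem coprime_of_injective (hF : Fintype.card F = q ^ 2) (hk : q + 1 = 2 * k)
    (hf : Function.Injective (f q k c u v r)) : r.Coprime ((q - 1) * k) := by
  by_contra hne
  obtain ⟨ζ, hζ1, hζr, hζm⟩ := exists_ne_one_pow_eq_one_of_gcd_ne_one (G := Fˣ) hne
    (card_units_eq hF hk ▸ dvd_mul_left _ _)
  refine hζ1 (Units.ext (hf ?_))
  rw [f_of_pow_half_eq_one (by rw [← Units.val_pow_eq_pow_val, hζm, Units.val_one]),
    Units.val_one, f_of_pow_half_eq_one (one_pow _), ← Units.val_pow_eq_pow_val, hζr]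
  simp

theorem f_pow_half_of_injective (hF : Fintype.card F = q ^ 2) (hk : q + 1 = 2 * k)
    (hc : (c / 2) ^ k = 1) (hu : Odd u) (hv : Odd v) (hf : Function.Injective (f q k c u v r))
    (hr : r.Coprime ((q - 1) * k)) (hx : x ^ ((q - 1) * k) = -1) :
    f q k c u v r x ^ ((q - 1) * k) = -1 := by
  have hc0 := ne_zero_of_half_pow_eq_one (by omega) hc
  have hneg := Ring.neg_one_ne_one_of_char_ne_two
    (ringChar_ne_two_of_card_eq_sq (F := F) hF ⟨k - 1, by omega⟩)
  refine (pow_half_eq_one_or_neg_one hF hk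
    (f_ne_zero hF hk hc hu hv (ne_zero_of_pow_half_eq_neg_one hF hk hx))).resolve_left ?_
  intro h1
  obtain ⟨y, hym, hyr⟩ := exists_pow_eq_of_coprime hr (one_lt_pred_mul hF hk)
    (z := f q k c u v r x / c)
    (by rw [div_pow, h1, pow_half_eq_one_of_half_pow_eq_one hF hk hc, div_one])
  have hyx : y = x := hf (by rw [f_of_pow_half_eq_one hym, hyr, mul_div_cancel₀ _ hc0])
  exact hneg (hx.symm.trans (hyx ▸ hym))

theorem exists_f_eq_of_pow_half_eq_neg_one (hF : Fintype.card F = q ^ 2) (hk : q + 1 = 2 * k)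
    (hc : (c / 2) ^ k = 1) (hf : Function.Surjective (f q k c u v r)) (hr : r ≠ 0)
    (hy : y ^ ((q - 1) * k) = -1) : ∃ x, x ^ ((q - 1) * k) = -1 ∧ f q k c u v r x = y := by
  obtain ⟨x, rfl⟩ := hf y
  have hx0 : x ≠ 0 := by
    rintro rfl
    exact ne_zero_of_pow_half_eq_neg_one hF hk hy (by rw [f, zero_pow hr, zero_mul])
  refine ⟨x, (pow_half_eq_one_or_neg_one hF hk hx0).resolve_left fun h1 => ?_, rfl⟩
  exact Ring.neg_one_ne_one_of_char_ne_two (ringChar_ne_two_of_card_eq_sq hF ⟨k - 1, by omega⟩)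
    (hy.symm.trans (f_pow_half_of_pow_half_eq_one hF hk hc h1))

theorem intGCD_sub_eq_one_of_bijective (hF : Fintype.card F = q ^ 2) (hk : q + 1 = 2 * k)
    (hc : (c / 2) ^ k = 1) (hu : Odd u) (hv : Odd v) (hf : Function.Bijective (f q k c u v r))
    (hr : r.Coprime ((q - 1) * k)) : Int.gcd ((r : ℤ) - u) k = 1 := by
  have hr0 : r ≠ 0 := by
    rintro rfl
    exact (one_lt_pred_mul hF hk).ne' ((Nat.coprime_zero_left _).mp hr)
  -- The preimage `x` of `f g * g ^ 2` makes `g ^ (2 (q - 1))`, of order `k`, an `(r - u)`-th power.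
  obtain ⟨g, hgm, hρ⟩ := exists_pow_half_eq_neg_one_orderOf hF hk
  have hfg0 := f_ne_zero (r := r) hF hk hc hu hv (ne_zero_of_pow_half_eq_neg_one hF hk hgm)
  obtain ⟨x, hxm, hx⟩ := exists_f_eq_of_pow_half_eq_neg_one hF hk hc hf.2 hr0
    (y := f q k c u v r g * g ^ 2) (by
      rw [mul_pow, f_pow_half_of_injective hF hk hc hu hv hf.1 hr hgm, pow_right_comm, hgm,
        neg_one_sq, mul_one])
  have key := div_pow_pred_mul_of_pow_half_eq_neg_one (r := r) hF hk hc hu hv hxm hgm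
  rw [hx, mul_div_cancel_left₀ _ hfg0, ← pow_mul] at key
  refine intGCD_sub_eq_one_of_pow_eq_pow_mul (by omega) ?_ (by rw [← key, mul_comm]) hρ
  rw [← pow_mul, div_pow, hxm, hgm, div_self (neg_ne_zero.mpr one_ne_zero)]

theorem eq_of_f_eq_of_pow_half_eq_neg_one (hF : Fintype.card F = q ^ 2) (hk : q + 1 = 2 * k)
    (hc : (c / 2) ^ k = 1) (hu : Odd u) (hv : Odd v) (hr : r.Coprime (q - 1))
    (hru : Int.gcd ((r : ℤ) - u) k = 1) (hx : x ^ ((q - 1) * k) = -1)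
    (hy : y ^ ((q - 1) * k) = -1) (hxy : f q k c u v r x = f q k c u v r y) : x = y := by
  have hy0 := ne_zero_of_pow_half_eq_neg_one hF hk hy
  have hζ : (x / y) ^ (q - 1) = 1 := by
    refine eq_one_of_pow_eq_pow_of_intGCD_sub_eq_one (by omega) ?_ ?_ hru
    · rw [← pow_mul, div_pow, hx, hy, div_self (neg_ne_zero.mpr one_ne_zero)]
    · have key := div_pow_pred_mul_of_pow_half_eq_neg_one (r := r) hF hk hc hu hv hx hy
      rwa [hxy, div_self (f_ne_zero hF hk hc hu hv hy0), one_pow, one_mul, eq_comm] at key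
  have hτ : x ^ (q - 1) = y ^ (q - 1) := by
    rwa [div_pow, div_eq_one_iff_eq (pow_ne_zero _ hy0)] at hζ
  have hxr : x ^ r = y ^ r := by
    rw [f, f, hτ] at hxy
    exact mul_right_cancel₀ (h_ne_zero hF hk hc hu hv (by rwa [← pow_mul])) hxy
  rw [← div_eq_one_iff_eq hy0, ← pow_eq_one_iff_of_coprime hr, div_pow, hxr,
    div_self (pow_ne_zero r hy0)]
  exact ⟨rfl, hζ⟩

theorem injective_of_coprime (hF : Fintype.card F = q ^ 2) (hk : q + 1 = 2 * k)
    (hc : (c / 2) ^ k = 1) (hu : Odd u) (hv : Odd v) (hr : r.Coprime ((q - 1) * k))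
    (hru : Int.gcd ((r : ℤ) - u) k = 1) : Function.Injective (f q k c u v r) := by
  have hm := one_lt_pred_mul hF hk
  have hr0 : r ≠ 0 := by
    rintro rfl
    exact hm.ne' ((Nat.coprime_zero_left _).mp hr)
  have hro : Odd r :=
    (hr.coprime_dvd_right (Dvd.dvd.mul_right ⟨k - 1, by omega⟩ k)).odd_of_right
  have hfm := fun z => f_pow_half_eq (x := z) hF hk hc hu hv
    (odd_of_intGCD_sub_eq_one hro hu hru) hro
  intro x y hxy
  have hzero := fun z => f_eq_zero_iff (x := z) hF hk hc hu hv hr0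
  rcases eq_or_ne y 0 with rfl | hy0
  · exact (hzero x).mp (hxy.trans ((hzero 0).mpr rfl))
  have hx0 : x ≠ 0 := fun hx0 => hy0 ((hzero y).mp (hxy ▸ (hzero x).mpr hx0))
  have hxm : x ^ ((q - 1) * k) = y ^ ((q - 1) * k) := by rw [← hfm x hx0, ← hfm y hy0, hxy]
  rcases pow_half_eq_one_or_neg_one hF hk hy0 with hym | hym
  · exact eq_of_f_eq_of_pow_half_eq_one (ne_zero_of_half_pow_eq_one (by omega) hc) hr hy0
      (hxm.trans hym) hym hxy
  · exact eq_of_f_eq_of_pow_half_eq_neg_one hF hk hc hu hv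
      (hr.coprime_dvd_right (dvd_mul_right _ _)) hru (hxm.trans hym) hym hxy

end XrhPerm

theorem stmt12_general (q : ℕ) (hodd : Odd q)
    (F : Type*) [Field F] [Fintype F] (hF : Fintype.card F = q ^ 2)
    (c : F) (hc : (c / 2) ^ ((q + 1) / 2) = 1)
    (u v : ℕ) (hu : Odd u) (hv : Odd v) (r : ℕ) :
    Function.Bijective (fun x : F => x ^ r *
      (c + (x ^ (q - 1)) ^ u * ((x ^ (q - 1)) ^ ((q + 1) * v / 2) - 1))) ↔
      (Nat.gcd r ((q ^ 2 - 1) / 2) = 1 ∧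
        Int.gcd ((r : ℤ) - u) (((q + 1) / 2 : ℕ) : ℤ) = 1) := by
  obtain ⟨k, hk⟩ : ∃ k, q + 1 = 2 * k := ⟨(q + 1) / 2, by obtain ⟨j, rfl⟩ := hodd; omega⟩
  have hkq : (q + 1) / 2 = k := by omega
  have hm : (q ^ 2 - 1) / 2 = (q - 1) * k := by
    rw [sq_eq_two_mul_pred_mul_add_one hk]
    omega
  have hkv : (q + 1) * v / 2 = k * v := by rw [hk, mul_assoc, Nat.mul_div_cancel_left _ two_pos]
  rw [hkq] at hc
  simp only [hkv, hm, hkq]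
  change Function.Bijective (XrhPerm.f q k c u v r) ↔ _
  refine ⟨fun hf => ?_, fun ⟨hr, hru⟩ => ?_⟩
  · have hr := XrhPerm.coprime_of_injective hF hk hf.1
    exact ⟨hr, XrhPerm.intGCD_sub_eq_one_of_bijective hF hk hc hu hv hf hr⟩
  · exact Finite.injective_iff_bijective.mp (XrhPerm.injective_of_coprime hF hk hc hu hv hr hru)

theorem stmt12 (p pn q : ℕ) (hp : p.Prime) (hpn : 0 < pn) (hq : q = p ^ pn)
    (hodd : Odd q)
    (F : Type*) [Field F] [Fintype F] (hF : Fintype.card F = q ^ 2)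
    (c : F) (hc : (c / 2) ^ ((q + 1) / 2) = 1)
    (u v : ℕ) (hu : Odd u) (hv : Odd v) (hu0 : 0 < u) (hv0 : 0 < v) (r : ℕ) :
    Function.Bijective (fun x : F => x ^ r *
      (c + (x ^ (q - 1)) ^ u * ((x ^ (q - 1)) ^ ((q + 1) * v / 2) - 1))) ↔
      (Nat.gcd r ((q ^ 2 - 1) / 2) = 1 ∧
        Int.gcd ((r : ℤ) - u) (((q + 1) / 2 : ℕ) : ℤ) = 1) :=
  stmt12_general q hodd F hF c hc u v hu hv r
end

section
/- Let q ≡ 3 (mod 4) be a prime power and c ∈ F_{q^2} with (c/2)^{(q+1)/2} = 1. Let u and v be odd positive integers and set h(x) = c + x^u(x^{(q+1)v/2} - 1). Then f(x) = x^r h(x^{q-1}) is never a permutation polynomial of F_{q^2}, for any integer r. -/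
theorem stmt13 (p pn q : ℕ) (hp : p.Prime) (hpn : 0 < pn) (hq : q = p ^ pn)
    (hq4 : q % 4 = 3)
    (F : Type*) [Field F] [Fintype F] (hF : Fintype.card F = q ^ 2)
    (c : F) (hc : (c / 2) ^ ((q + 1) / 2) = 1)
    (u v : ℕ) (hu : Odd u) (hv : Odd v) (hu0 : 0 < u) (hv0 : 0 < v) (r : ℕ) :
    ¬ Function.Bijective (fun x : F => x ^ r *
      (c + (x ^ (q - 1)) ^ u * ((x ^ (q - 1)) ^ ((q + 1) * v / 2) - 1))) := by
  intro hbij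
  obtain ⟨t, ht⟩ : ∃ t, q = 4 * t + 3 := ⟨q / 4, by omega⟩
  have hq3 : 3 ≤ q := by omega
  set m := (q + 1) / 2 with hm
  have hq1 : q + 1 = 2 * m := by omega
  have hmeven : Even m := ⟨t + 1, by omega⟩
  have hm0 : m ≠ 0 := by omega
  -- characteristic
  haveI hpf : Fact p.Prime := ⟨hp⟩
  haveI hcharF : CharP F p := by
    obtain ⟨p', hp'⟩ := CharP.exists F
    haveI := hp'
    haveI : Fact p'.Prime := ⟨CharP.char_is_prime F p'⟩
    obtain ⟨n, hn1, hn2⟩ := FiniteField.card F p'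
    have hdvd : p ∣ p' ^ (n : ℕ) := by
      rw [← hn2, hF, hq]
      exact dvd_pow (dvd_pow_self p hpn.ne') (by positivity)
    have : p = p' := ((Nat.prime_dvd_prime_iff_eq hp hn1).mp
      (hp.dvd_of_dvd_pow hdvd))
    exact this ▸ hp'
  have hpodd : p ≠ 2 := by
    rintro rfl
    have : 2 ∣ q := hq ▸ dvd_pow_self 2 hpn.ne'
    omega
  have hring2 : ringChar F ≠ 2 := by rw [ringChar.eq F p]; exact hpodd
  have h20 : (2 : F) ≠ 0 := Ring.two_ne_zero hring2
  have hc0 : c ≠ 0 := by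
    rintro rfl
    rw [zero_div, zero_pow hm0] at hc
    exact zero_ne_one hc
  have hcm : c ^ m = 2 ^ m := by
    have h := hc
    rw [div_pow, div_eq_one_iff_eq (pow_ne_zero _ h20)] at h
    exact h
  have h2q : (2 : F) ^ q = 2 := by
    have h : ((1 : F) + 1) ^ p ^ pn = 1 ^ p ^ pn + 1 ^ p ^ pn :=
      add_pow_char_pow (x := (1 : F)) (y := 1) (p := p) (n := pn)
    simpa [hq, one_add_one_eq_two] using h
  have h2q1 : (2 : F) ^ (q - 1) = 1 := by
    have h : (2 : F) ^ (q - 1) * 2 = 1 * 2 := by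
      rw [one_mul, ← pow_succ]
      have h2 : q - 1 + 1 = q := by omega
      rw [h2, h2q]
    exact mul_right_cancel₀ h20 h
  have hE : Fintype.card F / 2 = (q - 1) * m := by
    have hkey : q ^ 2 = 2 * ((q - 1) * m) + 1 := by
      have hm' : m = 2 * t + 2 := by omega
      have h2 : q - 1 = 4 * t + 2 := by omega
      rw [h2, hm', ht]; ring
    rw [hF, hkey, Nat.mul_add_div (by norm_num)]
    omega
  have hexp : (q + 1) * v / 2 = m * v := by
    rw [hq1, Nat.mul_assoc, Nat.mul_div_cancel_left _ (by norm_num)]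
  have hqm1even : Even (q - 1) := ⟨2 * t + 1, by omega⟩
  have hqq : (q - 1) * (q + 1) = q ^ 2 - 1 := by
    have h1 : (q - 1) * (q + 1) + 1 = q ^ 2 := by
      have h2 : q - 1 = 4 * t + 2 := by omega
      rw [h2, ht]; ring
    omega
  have hcE : c ^ ((q - 1) * m) = 1 := by
    rw [mul_comm, pow_mul, hcm, ← pow_mul, mul_comm m (q - 1), pow_mul, h2q1, one_pow]
  rcases Nat.even_or_odd r with hr | hr
  · -- r even : f 1 = f (-1) = c
    have h1 : (fun x : F => x ^ r *
        (c + (x ^ (q - 1)) ^ u * ((x ^ (q - 1)) ^ ((q + 1) * v / 2) - 1))) 1 = c := by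
      simp
    have h2 : (fun x : F => x ^ r *
        (c + (x ^ (q - 1)) ^ u * ((x ^ (q - 1)) ^ ((q + 1) * v / 2) - 1))) (-1) = c := by
      simp only
      rw [hqm1even.neg_one_pow, hr.neg_one_pow]
      simp
    have h12 : (1 : F) = -1 := hbij.injective (h1.trans h2.symm)
    exact h20 (by linear_combination h12)
  · -- r odd
    have hr0 : r ≠ 0 := by obtain ⟨k, hk⟩ := hr; omega
    obtain ⟨a, ha⟩ := FiniteField.exists_nonsquare (F := F) hring2
    obtain ⟨x, hx⟩ := hbij.surjective a
    simp only at hx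
    have hx0 : x ≠ 0 := by
      rintro rfl
      apply ha
      rw [← hx, zero_pow hr0, zero_mul]
      exact ⟨0, by simp⟩
    have hxcard : x ^ (q ^ 2 - 1) = 1 := by
      have h := FiniteField.pow_card_sub_one_eq_one x hx0
      rwa [hF] at h
    obtain ⟨y, hy⟩ : ∃ y : F, x ^ (q - 1) = y := ⟨_, rfl⟩
    have hy0 : y ≠ 0 := hy ▸ pow_ne_zero _ hx0
    have hyq1 : y ^ (q + 1) = 1 := by
      rw [← hy, ← pow_mul, hqq, hxcard]
    have hym2 : y ^ m * (y ^ m) = 1 := by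
      rw [← pow_add]
      have h2 : m + m = q + 1 := by omega
      rw [h2, hyq1]
    have hsx : y ^ m = x ^ ((q - 1) * m) := by rw [← hy, ← pow_mul]
    rcases mul_self_eq_one_iff.mp hym2 with hs1 | hs1
    · -- y^m = 1 : x is a square
      have hyv : y ^ ((q + 1) * v / 2) = 1 := by
        rw [hexp, pow_mul, hs1, one_pow]
      have hfx : a = x ^ r * c := by
        rw [← hx, hy, hyv]; ring
      have ha0 : a ≠ 0 := by
        rw [hfx]; exact mul_ne_zero (pow_ne_zero _ hx0) hc0
      apply ha
      rw [FiniteField.isSquare_iff hring2 ha0, hE, hfx, mul_pow, ← pow_mul,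
        mul_comm r ((q - 1) * m), pow_mul, ← hsx, hs1, one_pow, one_mul, hcE]
    · -- y^m = -1 : x is a nonsquare
      have hym : y ^ m = -1 := hs1
      have hyv : y ^ ((q + 1) * v / 2) = -1 := by
        rw [hexp, pow_mul, hym, hv.neg_one_pow]
      obtain ⟨z, hz⟩ : ∃ z : F, c - 2 * y ^ u = z := ⟨_, rfl⟩
      have hz0 : z ≠ 0 := by
        rintro rfl
        have hcy : c = 2 * y ^ u := by linear_combination hz
        have hcontra : (c / 2) ^ m = -1 := by
          rw [hcy, mul_comm, mul_div_assoc, div_self h20, mul_one,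
            ← pow_mul, mul_comm u m, pow_mul, hym, hu.neg_one_pow]
        rw [hc] at hcontra
        exact h20 (by linear_combination hcontra)
      have hfx : a = x ^ r * z := by
        rw [← hx, hy, hyv]; linear_combination (x ^ r) * hz
      have hyqy : y ^ q * y = 1 := by rw [← pow_succ, hyq1]
      have hcqc : c ^ q * c = 4 := by
        have h1 : c ^ (q + 1) = 4 := by
          rw [hq1, pow_mul', hcm, ← pow_mul', ← hq1, pow_succ, h2q]
          norm_num
        rw [← h1, pow_succ]
      have hzq : z ^ q = c ^ q - 2 * (y ^ q) ^ u := by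
        have h := sub_pow_char_pow (R := F) (x := c) (y := 2 * y ^ u) (p := p) (n := pn)
        rw [← hq, hz] at h
        rw [h, mul_pow, h2q, ← pow_mul, mul_comm u q, pow_mul]
      have h5 : (y ^ q) ^ u * y ^ u = 1 := by
        rw [← mul_pow, hyqy, one_pow]
      have hkey : z ^ q * (c * y ^ u) = -2 * z := by
        rw [hzq]
        linear_combination y ^ u * hcqc + (-2 * c) * h5 + (-2) * hz
      have hkey2 : z ^ (q * m) * ((c * y ^ u) ^ m) = (-2) ^ m * z ^ m := by
        rw [pow_mul, ← mul_pow, hkey, mul_pow]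
      have hcyu : (c * y ^ u) ^ m = -(2 ^ m) := by
        rw [mul_pow, hcm, ← pow_mul, mul_comm u m, pow_mul, hym, hu.neg_one_pow]
        ring
      have hn2m : ((-2 : F)) ^ m = 2 ^ m := hmeven.neg_pow 2
      have h2m0 : (2 : F) ^ m ≠ 0 := pow_ne_zero _ h20
      have hkey3 : z ^ (q * m) = -(z ^ m) := by
        rw [hcyu, hn2m] at hkey2
        refine mul_right_cancel₀ h2m0 ?_
        linear_combination -hkey2
      have hqmE : q * m = (q - 1) * m + m := by
        have h1 : (q - 1) * m = q * m - m := Nat.sub_one_mul q m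
        have h2 : m ≤ q * m := Nat.le_mul_of_pos_left m (by omega)
        omega
      have hzE : z ^ ((q - 1) * m) = -1 := by
        refine mul_right_cancel₀ (pow_ne_zero m hz0) ?_
        rw [← pow_add, ← hqmE, hkey3]
        ring
      have ha0 : a ≠ 0 := by
        rw [hfx]; exact mul_ne_zero (pow_ne_zero _ hx0) hz0
      apply ha
      rw [FiniteField.isSquare_iff hring2 ha0, hE, hfx, mul_pow, ← pow_mul,
        mul_comm r ((q - 1) * m), pow_mul, ← hsx, hs1, hr.neg_one_pow, hzE]
      ring
end

section
/- Let q be an odd prime power with q ≡ 1 (mod 4), let d be even dividing q+1, k odd, v = (q+1)/d, v_1 = (d-1)v, and let c ∈ F_{q^2} satisfy (c/2)^{(q+1)/2} = 1. Then c + 2x^{v_1+k} ≠ 0 for every x ∈ μ_{q+1}. -/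
theorem stmt14 (p pn q : ℕ) (hp : p.Prime) (hpn : 0 < pn) (hq : q = p ^ pn)
    (hq4 : q % 4 = 1)
    (F : Type*) [Field F] [Fintype F] (hF : Fintype.card F = q ^ 2)
    (d : ℕ) (hdeven : Even d) (hd : 0 < d) (hdvd : d ∣ q + 1)
    (k : ℕ) (hk : Odd k)
    (c : F) (hc : (c / 2) ^ ((q + 1) / 2) = 1) :
    ∀ x : F, x ^ (q + 1) = 1 → c + 2 * x ^ ((d - 1) * ((q + 1) / d) + k) ≠ 0 := by
  intro x hx hcon
  have hqodd : Odd q := Nat.odd_iff.mpr (by omega)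
  have hcardodd : Odd (Fintype.card F) := by
    rw [hF]; exact hqodd.pow
  have h2 : (2 : F) ≠ 0 := by
    intro h20
    haveI := ringChar.charP F
    have hchar : ringChar F ∣ 2 := ringChar.dvd (by exact_mod_cast h20)
    have hprime : (ringChar F).Prime := CharP.char_is_prime F (ringChar F)
    have hc2 : ringChar F = 2 :=
      ((Nat.prime_dvd_prime_iff_eq hprime Nat.prime_two).mp hchar)
    obtain ⟨n, -, hcard⟩ := FiniteField.card F (ringChar F)
    rw [hc2] at hcard
    rw [hcard] at hcardodd
    have h2d : 2 ∣ 2 ^ (n : ℕ) := dvd_pow_self 2 n.pos.ne'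
    have := Nat.odd_iff.mp hcardodd
    omega
  -- v = (q+1)/d is odd
  set v := (q + 1) / d with hv
  obtain ⟨e, he⟩ := hdeven
  have hdv : d * v = q + 1 := Nat.mul_div_cancel' hdvd
  have hvodd : Odd v := by
    rcases Nat.even_or_odd v with hve | hvo
    · obtain ⟨f, hf⟩ := hve
      exfalso
      have : q + 1 = 4 * (e * f) := by rw [← hdv, he, hf]; ring
      omega
    · exact hvo
  have hnodd1 : Odd ((d - 1) * v) := by
    refine Odd.mul ?_ hvodd
    exact Nat.odd_iff.mpr (by omega)
  have hneven : Even ((d - 1) * v + k) := Odd.add_odd hnodd1 hk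
  obtain ⟨t, ht⟩ := hneven
  set n := (d - 1) * v + k with hn
  -- c / 2 = -(x ^ n)
  have hcd : c / 2 = -(x ^ n) := by
    field_simp
    linear_combination hcon
  rw [hcd] at hc
  have hmodd : Odd ((q + 1) / 2) := Nat.odd_iff.mpr (by omega)
  have hxn : (x ^ n) ^ ((q + 1) / 2) = 1 := by
    rw [← pow_mul]
    have h2m : 2 * ((q + 1) / 2) = q + 1 := by omega
    have hnm : n * ((q + 1) / 2) = (q + 1) * t := by
      rw [ht]
      calc (t + t) * ((q + 1) / 2) = t * (2 * ((q + 1) / 2)) := by ring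
        _ = (q + 1) * t := by rw [h2m]; ring
    rw [hnm, pow_mul, hx, one_pow]
  rw [hmodd.neg_pow, hxn] at hc
  have : (2 : F) = 0 := by linear_combination -hc
  exact h2 this
end
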